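/- arXiv:1910.14384 — 3 statements merged into one kernel-verified Lean document; each statement's English description precedes it below -/
import Mathlib

section
/- Let P be a finite poset with boxes whose full event set is not a box, having at least two events, and avoiding patterns P2, P3, P4. If P contains a non-trivial isolated set of events, then P contains a non-trivial isolated set that is also nested. -/
/-- A poset with boxes over an alphabet `A`. -/
structure PB (A : Type) : Type 1 where
  Ev : Type
  le : Ev → Ev → Prop
  le_refl : ∀ e, le e e
  le_trans : ∀ e f g, le e f → le f g → le e g
  le_antisymm : ∀ e f, le e f → le f e → e = f
  lab : Ev → A
  boxes : Set (Set Ev)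
  boxes_ne : ∀ B ∈ boxes, B.Nonempty

/-- A homomorphism of posets with boxes: a bijection preserving labels,
order and boxes. -/
structure Hom {A : Type} (P Q : PB A) where
  toFun : P.Ev → Q.Ev
  bij : Function.Bijective toFun
  lab_eq : ∀ e, Q.lab (toFun e) = P.lab e
  mono : ∀ e f, P.le e f → Q.le (toFun e) (toFun f)
  box_pres : ∀ B ∈ P.boxes, toFun '' B ∈ Q.boxes

/-- Order-reflecting homomorphism. -/
def Hom.OrdRefl {A : Type} {P Q : PB A} (φ : Hom P Q) : Prop :=
  ∀ e f, Q.le (φ.toFun e) (φ.toFun f) → P.le e f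

/-- Box-reflecting homomorphism. -/
def Hom.BoxRefl {A : Type} {P Q : PB A} (φ : Hom P Q) : Prop :=
  ∀ B : Set P.Ev, φ.toFun '' B ∈ Q.boxes → B ∈ P.boxes

/-- Isomorphism of posets with boxes. -/
def Iso {A : Type} (P Q : PB A) : Prop :=
  ∃ φ : Hom P Q, φ.OrdRefl ∧ φ.BoxRefl

/-- `Subsume P Q` means `P ⊑ Q` : there is a homomorphism from `Q` to `P`. -/
def Subsume {A : Type} (P Q : PB A) : Prop := Nonempty (Hom Q P)

/-- The empty poset with boxes. -/
def onePB (A : Type) : PB A where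
  Ev := PEmpty
  le := fun _ _ => True
  le_refl := fun e => trivial
  le_trans := fun _ _ _ _ _ => trivial
  le_antisymm := fun e => e.elim
  lab := fun e => e.elim
  boxes := ∅
  boxes_ne := fun _ h => absurd h (Set.notMem_empty _)

/-- The atomic poset with boxes, with a single event labelled `a`. -/
def atomPB {A : Type} (a : A) : PB A where
  Ev := PUnit
  le := fun _ _ => True
  le_refl := fun _ => trivial
  le_trans := fun _ _ _ _ _ => trivial
  le_antisymm := fun _ _ _ _ => rfl
  lab := fun _ => a
  boxes := ∅
  boxes_ne := fun _ h => absurd h (Set.notMem_empty _)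

/-- The order of a sequential composition on the disjoint union of events. -/
def seqLE {A : Type} (P Q : PB A) : P.Ev ⊕ Q.Ev → P.Ev ⊕ Q.Ev → Prop
  | .inl a, .inl b => P.le a b
  | .inr a, .inr b => Q.le a b
  | .inl _, .inr _ => True
  | .inr _, .inl _ => False

/-- Sequential composition of posets with boxes. -/
def seqPB {A : Type} (P Q : PB A) : PB A where
  Ev := P.Ev ⊕ Q.Ev
  le := seqLE P Q
  le_refl := fun e => by cases e <;> simp [seqLE, PB.le_refl]
  le_trans := fun e f g hef hfg => by
    cases e <;> cases f <;> cases g <;>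
      simp_all [seqLE] <;>
      first
        | exact P.le_trans _ _ _ hef hfg
        | exact Q.le_trans _ _ _ hef hfg
  le_antisymm := fun e f hef hfe => by
    cases e <;> cases f <;> simp_all [seqLE]
    · exact P.le_antisymm _ _ hef hfe
    · exact Q.le_antisymm _ _ hef hfe
  lab := Sum.elim P.lab Q.lab
  boxes := (Set.image Sum.inl '' P.boxes) ∪ (Set.image Sum.inr '' Q.boxes)
  boxes_ne := by
    rintro B (⟨C, hC, rfl⟩ | ⟨C, hC, rfl⟩)
    · exact ((P.boxes_ne C hC).image _)
    · exact ((Q.boxes_ne C hC).image _)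

/-- The order of a parallel composition on the disjoint union of events. -/
def parLE {A : Type} (P Q : PB A) : P.Ev ⊕ Q.Ev → P.Ev ⊕ Q.Ev → Prop
  | .inl a, .inl b => P.le a b
  | .inr a, .inr b => Q.le a b
  | .inl _, .inr _ => False
  | .inr _, .inl _ => False

/-- Parallel composition of posets with boxes. -/
def parPB {A : Type} (P Q : PB A) : PB A where
  Ev := P.Ev ⊕ Q.Ev
  le := parLE P Q
  le_refl := fun e => by cases e <;> simp [parLE, PB.le_refl]
  le_trans := fun e f g hef hfg => by
    cases e <;> cases f <;> cases g <;>
      simp_all [parLE] <;>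
      first
        | exact P.le_trans _ _ _ hef hfg
        | exact Q.le_trans _ _ _ hef hfg
  le_antisymm := fun e f hef hfe => by
    cases e <;> cases f <;> simp_all [parLE]
    · exact P.le_antisymm _ _ hef hfe
    · exact Q.le_antisymm _ _ hef hfe
  lab := Sum.elim P.lab Q.lab
  boxes := (Set.image Sum.inl '' P.boxes) ∪ (Set.image Sum.inr '' Q.boxes)
  boxes_ne := by
    rintro B (⟨C, hC, rfl⟩ | ⟨C, hC, rfl⟩)
    · exact ((P.boxes_ne C hC).image _)
    · exact ((Q.boxes_ne C hC).image _)

/-- Boxing: add the full (nonempty) set of events as a box. -/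
def boxPB {A : Type} (P : PB A) : PB A where
  Ev := P.Ev
  le := P.le
  le_refl := P.le_refl
  le_trans := P.le_trans
  le_antisymm := P.le_antisymm
  lab := P.lab
  boxes := P.boxes ∪ {B | B = Set.univ ∧ B.Nonempty}
  boxes_ne := by
    rintro B (hB | ⟨rfl, hne⟩)
    · exact P.boxes_ne B hB
    · exact hne

/-- Restriction of a poset with boxes to a subset of its events. -/
def restrictPB {A : Type} (P : PB A) (S : Set P.Ev) : PB A where
  Ev := S
  le := fun x y => P.le x.1 y.1
  le_refl := fun x => P.le_refl x.1
  le_trans := fun x y z => P.le_trans x.1 y.1 z.1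
  le_antisymm := fun x y h h' => Subtype.ext (P.le_antisymm _ _ h h')
  lab := fun x => P.lab x.1
  boxes := {B | Subtype.val '' B ∈ P.boxes}
  boxes_ne := fun B hB => by
    rcases P.boxes_ne _ hB with ⟨x, ⟨y, hy, rfl⟩⟩
    exact ⟨y, hy⟩

/-- Forbidden pattern P1 (the `N` pattern). -/
def hasP1 {A : Type} (P : PB A) : Prop :=
  ∃ e1 e2 e3 e4 : P.Ev,
    P.le e1 e3 ∧ P.le e2 e3 ∧ P.le e2 e4 ∧
    ¬ P.le e1 e4 ∧ ¬ P.le e2 e1 ∧ ¬ P.le e4 e3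

/-- Forbidden pattern P2 (overlapping non-nested boxes). -/
def hasP2 {A : Type} (P : PB A) : Prop :=
  ∃ (Bx Cx : Set P.Ev) (e1 e2 e3 : P.Ev),
    Bx ∈ P.boxes ∧ Cx ∈ P.boxes ∧
    e1 ∈ Bx \ Cx ∧ e2 ∈ Bx ∩ Cx ∧ e3 ∈ Cx \ Bx

/-- Forbidden pattern P3. -/
def hasP3 {A : Type} (P : PB A) : Prop :=
  ∃ (Bx : Set P.Ev) (e1 e2 e3 : P.Ev),
    Bx ∈ P.boxes ∧ e1 ∉ Bx ∧ e2 ∈ Bx ∧ e3 ∈ Bx ∧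
    P.le e1 e2 ∧ ¬ P.le e1 e3

/-- Forbidden pattern P4. -/
def hasP4 {A : Type} (P : PB A) : Prop :=
  ∃ (Bx : Set P.Ev) (e1 e2 e3 : P.Ev),
    Bx ∈ P.boxes ∧ e1 ∉ Bx ∧ e2 ∈ Bx ∧ e3 ∈ Bx ∧
    P.le e2 e1 ∧ ¬ P.le e3 e1

/-- A set of events is non-trivial if it is neither empty nor everything. -/
def NonTrivial {A : Type} (P : PB A) (S : Set P.Ev) : Prop :=
  S ≠ ∅ ∧ S ≠ Set.univ

/-- A set of events is nested if every box is contained in it or disjoint from it. -/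
def Nested {A : Type} (P : PB A) (S : Set P.Ev) : Prop :=
  ∀ B ∈ P.boxes, B ⊆ S ∨ B ∩ S = ∅

/-- A set of events is prefix if every event in it is below every event outside. -/
def IsPrefix {A : Type} (P : PB A) (S : Set P.Ev) : Prop :=
  ∀ e ∈ S, ∀ f ∉ S, P.le e f

/-- A set of events is isolated if its events are incomparable with outside events. -/
def Isolated {A : Type} (P : PB A) (S : Set P.Ev) : Prop :=
  ∀ e ∈ S, ∀ f ∉ S, ¬ P.le e f ∧ ¬ P.le f e

/-! Call two events connected when a chain of comparable events joins them. Forbidden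
patterns P3 and P4 make every box either isolated or connected, and P2 makes boxes laminar.
An isolated set is a union of connected components, so it swallows or misses each connected
box. Hence, if some box is isolated, a maximal isolated box is nested (it is not everything,
because the full event set is not a box); otherwise every box is connected, and the component
of an event of the given isolated set is a nested, non-trivial isolated set. -/

namespace PB

variable {A : Type} (P : PB A)

def Comparable (e f : P.Ev) : Prop := P.le e f ∨ P.le f e

def Connected : P.Ev → P.Ev → Prop := Relation.EqvGen P.Comparable

variable {P}

theorem connected_of_le_common {e e' g : P.Ev} (he : P.le e g) (he' : P.le e' g) :
    P.Connected e e' :=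
  .trans _ _ _ (.rel _ _ (.inl he)) (.symm _ _ (.rel _ _ (.inl he')))

theorem connected_of_common_le {e e' g : P.Ev} (he : P.le g e) (he' : P.le g e') :
    P.Connected e e' :=
  .trans _ _ _ (.rel _ _ (.inr he)) (.symm _ _ (.rel _ _ (.inr he')))

theorem _root_.Isolated.mem_iff_of_connected {S : Set P.Ev} (hS : Isolated P S) {e f : P.Ev}
    (h : P.Connected e f) : e ∈ S ↔ f ∈ S := by
  have hequiv : Equivalence fun a b : P.Ev => (a ∈ S ↔ b ∈ S) :=
    ⟨fun _ => Iff.rfl, Iff.symm, Iff.trans⟩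
  refine hequiv.eqvGen_iff.1 (Relation.EqvGen.mono (fun a b hab => ?_) _ _ h)
  refine ⟨fun ha => ?_, fun hb => ?_⟩ <;> by_contra hout
  · exact not_or.2 (hS a ha b hout) hab
  · exact not_or.2 (hS b hb a hout) hab.symm

theorem isolated_setOf_connected (e : P.Ev) : Isolated P {x | P.Connected e x} :=
  fun _ hx _ hy =>
    ⟨fun hle => hy (.trans _ _ _ hx (.rel _ _ (.inl hle))),
     fun hle => hy (.trans _ _ _ hx (.rel _ _ (.inr hle)))⟩

theorem nonTrivial_setOf_connected {S : Set P.Ev} (hS : Isolated P S) {e f : P.Ev}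
    (he : e ∈ S) (hf : f ∉ S) : NonTrivial P {x | P.Connected e x} :=
  ⟨Set.nonempty_iff_ne_empty.1 ⟨e, .refl e⟩,
   (Set.ne_univ_iff_exists_notMem _).2 ⟨f, fun hef => hf ((hS.mem_iff_of_connected hef).1 he)⟩⟩

theorem nonTrivial_of_mem_boxes (hbox : (Set.univ : Set P.Ev) ∉ P.boxes) {B : Set P.Ev}
    (hB : B ∈ P.boxes) : NonTrivial P B :=
  ⟨(P.boxes_ne B hB).ne_empty, fun h => hbox (h ▸ hB)⟩

theorem connected_of_mem_box_of_not_isolated (h3 : ¬ hasP3 P) (h4 : ¬ hasP4 P)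
    {B : Set P.Ev} (hB : B ∈ P.boxes) (hB' : ¬ Isolated P B) {e e' : P.Ev}
    (he : e ∈ B) (he' : e' ∈ B) : P.Connected e e' := by
  obtain ⟨x, hx, y, hy, hxy⟩ := by
    simpa only [Isolated, not_forall, not_and_or, not_not] using hB'
  rcases hxy with hxy | hyx
  · have below (z : P.Ev) (hz : z ∈ B) : P.le z y := by
      by_contra h
      exact h4 ⟨B, y, x, z, hB, hy, hx, hz, hxy, h⟩
    exact connected_of_le_common (below e he) (below e' he')
  · have above (z : P.Ev) (hz : z ∈ B) : P.le y z := by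
      by_contra h
      exact h3 ⟨B, y, x, z, hB, hy, hx, hz, hyx, h⟩
    exact connected_of_common_le (above e he) (above e' he')

theorem boxes_laminar (h2 : ¬ hasP2 P) {B C : Set P.Ev} (hB : B ∈ P.boxes)
    (hC : C ∈ P.boxes) : B ⊆ C ∨ C ⊆ B ∨ B ∩ C = ∅ := by
  by_contra! ⟨hBC, hCB, ⟨x, hx⟩⟩
  obtain ⟨b, hbB, hbC⟩ := Set.not_subset.1 hBC
  obtain ⟨c, hcC, hcB⟩ := Set.not_subset.1 hCB
  exact h2 ⟨B, C, b, x, c, hB, hC, ⟨hbB, hbC⟩, hx, ⟨hcC, hcB⟩⟩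

theorem nested_of_isolated (h3 : ¬ hasP3 P) (h4 : ¬ hasP4 P) {S : Set P.Ev}
    (hS : Isolated P S)
    (hboxes : ∀ B ∈ P.boxes, Isolated P B → B ⊆ S ∨ B ∩ S = ∅) : Nested P S := by
  intro B hB
  by_cases hBi : Isolated P B
  · exact hboxes B hB hBi
  rcases (B ∩ S).eq_empty_or_nonempty with hdisj | ⟨x, hxB, hxS⟩
  · exact .inr hdisj
  · exact .inl fun e he =>
      (hS.mem_iff_of_connected (connected_of_mem_box_of_not_isolated h3 h4 hB hBi hxB he)).1 hxS

end PB

open PB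

theorem nontrivial_isolated_nested_general (A : Type) (P : PB A)
    (hfin : Finite P.Ev)
    (hbox : (Set.univ : Set P.Ev) ∉ P.boxes)
    (h2 : ¬ hasP2 P) (h3 : ¬ hasP3 P) (h4 : ¬ hasP4 P)
    (hA : ∃ S : Set P.Ev, NonTrivial P S ∧ Isolated P S) :
    ∃ S : Set P.Ev, NonTrivial P S ∧ Isolated P S ∧ Nested P S := by
  by_cases hiso : ∃ B ∈ P.boxes, Isolated P B
  · obtain ⟨Bm, ⟨hBm, hBmi⟩, hmax⟩ :=
      (Set.toFinite {B | B ∈ P.boxes ∧ Isolated P B}).exists_maximal hiso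
    refine ⟨Bm, nonTrivial_of_mem_boxes hbox hBm, hBmi,
      nested_of_isolated h3 h4 hBmi fun C hC hCi => ?_⟩
    rcases boxes_laminar h2 hC hBm with hsub | hsup | hdisj
    · exact .inl hsub
    · exact .inl (hmax ⟨hC, hCi⟩ hsup)
    · exact .inr hdisj
  · push Not at hiso
    obtain ⟨S, ⟨hne, hnu⟩, hS⟩ := hA
    obtain ⟨e, he⟩ := Set.nonempty_iff_ne_empty.2 hne
    obtain ⟨f, hf⟩ := (Set.ne_univ_iff_exists_notMem S).1 hnu
    exact ⟨_, nonTrivial_setOf_connected hS he hf, isolated_setOf_connected e,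
      nested_of_isolated h3 h4 (isolated_setOf_connected e) fun C hC hCi =>
        absurd hCi (hiso C hC)⟩

/-- If a finite poset with boxes (whose full event set is not a box, with at least
two events, avoiding patterns P2, P3, P4) contains a non-trivial isolated set, it
contains a non-trivial isolated set that is nested. -/
theorem nontrivial_isolated_nested (A : Type) (P : PB A)
    (hfin : Finite P.Ev)
    (hbox : (Set.univ : Set P.Ev) ∉ P.boxes)
    (htwo : ∃ e f : P.Ev, e ≠ f)
    (h2 : ¬ hasP2 P) (h3 : ¬ hasP3 P) (h4 : ¬ hasP4 P)
    (hA : ∃ S : Set P.Ev, NonTrivial P S ∧ Isolated P S) :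
    ∃ S : Set P.Ev, NonTrivial P S ∧ Isolated P S ∧ Nested P S :=
  nontrivial_isolated_nested_general A P hfin hbox h2 h3 h4 hA
end

section
/- A finite pomset with boxes is series–parallel (the interpretation of some term over 1, atoms, sequencing, parallel, and boxing) if and only if it contains none of the four forbidden patterns P1, P2, P3, P4. -/
/-- Series–parallel terms. -/
inductive Term (A : Type) : Type
  | one : Term A
  | atom (a : A) : Term A
  | seq (s t : Term A) : Term A
  | par (s t : Term A) : Term A
  | box (s : Term A) : Term A

/-- Interpretation of terms as posets with boxes. -/
def semT {A : Type} : Term A → PB A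
  | .one => onePB A
  | .atom a => atomPB a
  | .seq s t => seqPB (semT s) (semT t)
  | .par s t => parPB (semT s) (semT t)
  | .box s => boxPB (semT s)

/-- Derivability in the equational theory of bimonoids with boxes. -/
inductive BimEq {A : Type} : Term A → Term A → Prop
  | seq_assoc (s t u : Term A) : BimEq (.seq s (.seq t u)) (.seq (.seq s t) u)
  | par_assoc (s t u : Term A) : BimEq (.par s (.par t u)) (.par (.par s t) u)
  | par_comm (s t : Term A) : BimEq (.par s t) (.par t s)
  | seq_unit_l (s : Term A) : BimEq (.seq .one s) s
  | seq_unit_r (s : Term A) : BimEq (.seq s .one) s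
  | par_unit (s : Term A) : BimEq (.par .one s) s
  | box_box (s : Term A) : BimEq (.box (.box s)) (.box s)
  | box_one : BimEq (.box .one) .one
  | refl (s : Term A) : BimEq s s
  | symm {s t : Term A} : BimEq s t → BimEq t s
  | trans {s t u : Term A} : BimEq s t → BimEq t u → BimEq s u
  | seq_congr {s s' t t' : Term A} : BimEq s s' → BimEq t t' → BimEq (.seq s t) (.seq s' t')
  | par_congr {s s' t t' : Term A} : BimEq s s' → BimEq t t' → BimEq (.par s t) (.par s' t')
  | box_congr {s s' : Term A} : BimEq s s' → BimEq (.box s) (.box s')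

/-- Derivability in the inequational theory of concurrent monoids with boxes:
bimonoid axioms (in both directions) together with exchange and box elimination. -/
inductive CMLe {A : Type} : Term A → Term A → Prop
  | of_eq {s t : Term A} : BimEq s t → CMLe s t
  | exchange (s t u v : Term A) :
      CMLe (.seq (.par s t) (.par u v)) (.par (.seq s u) (.seq t v))
  | box_le (s : Term A) : CMLe (.box s) s
  | refl (s : Term A) : CMLe s s
  | trans {s t u : Term A} : CMLe s t → CMLe t u → CMLe s u
  | seq_congr {s s' t t' : Term A} : CMLe s s' → CMLe t t' → CMLe (.seq s t) (.seq s' t')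
  | par_congr {s s' t t' : Term A} : CMLe s s' → CMLe t t' → CMLe (.par s t) (.par s' t')
  | box_congr {s s' : Term A} : CMLe s s' → CMLe (.box s) (.box s')

/-!
Terms denote pattern-free posets with boxes: a pattern inside a sequential or parallel
composition lives in one component or straddles the two in a way the composition forbids, and
the box added by `box` contains every event. Conversely let `P` be finite and pattern-free. A box
covering all events is peeled off by `box`. Otherwise the boxes are laminar (no P2), so sharing a
box is an equivalence, and every box is a module of the order (no P3, P4), so comparability passes
to the box classes. The comparability graph on the classes has no induced path on four vertices,
since such a path would be an N (P1). By Seinsche's theorem that graph or its complement is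
disconnected. A component gives an isolated union of classes, hence a parallel decomposition. A
component of the complement is comparable with every event outside it, and the events below it
form a nested prefix, hence a sequential decomposition. Induction on the number of events
concludes.
-/

namespace SimpleGraph

variable {V : Type*} (G : SimpleGraph V)

def IsP4Free : Prop :=
  ∀ a b c d, G.Adj a b → G.Adj b c → G.Adj c d → ¬ G.Adj a c → ¬ G.Adj a d → ¬ G.Adj b d → False

def DisconnectedOn (s : Set V) : Prop :=
  ∃ C ⊆ s, C.Nonempty ∧ ¬ s ⊆ C ∧ ∀ x ∈ C, ∀ y ∈ s, G.Adj x y → y ∈ C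

variable {G}

theorem IsP4Free.compl (h : G.IsP4Free) : Gᶜ.IsP4Free := by
  intro a b c d hab hbc hcd hac had hbd
  simp only [compl_adj, not_and, not_not] at hab hbc hcd hac had hbd
  rcases eq_or_ne a c with rfl | hac'
  · exact hcd.2 (had hcd.1)
  rcases eq_or_ne b d with rfl | hbd'
  · exact hab.2 (had hab.1)
  rcases eq_or_ne a d with rfl | had'
  · exact hcd.2 ((hac hac').symm)
  exact h b d a c (hbd hbd') (had had').symm (hac hac') (fun h => hab.2 h.symm) hbc.2
    (fun h => hcd.2 h.symm)

theorem DisconnectedOn.nontrivial {s : Set V} (h : G.DisconnectedOn s) : s.Nontrivial := by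
  obtain ⟨C, hCs, ⟨x, hx⟩, hsC, -⟩ := h
  obtain ⟨y, hys, hyC⟩ := Set.not_subset.1 hsC
  exact ⟨x, hCs hx, y, hys, fun h => hyC (h ▸ hx)⟩

theorem disconnectedOn_compl_of_forall_adj {s : Set V} {v : V} (hv : v ∈ s) (hs : s.Nontrivial)
    (h : ∀ t ∈ s, t ≠ v → G.Adj t v) : Gᶜ.DisconnectedOn s := by
  refine ⟨{v}, Set.singleton_subset_iff.2 hv, Set.singleton_nonempty v,
    hs.not_subset_singleton, ?_⟩
  rintro x rfl y hy ⟨hne, hnadj⟩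
  exact (hnadj (h y hy hne.symm).symm).elim

theorem IsP4Free.adj_of_mem_side {s C : Set V} {v t w : V} (hP : G.IsP4Free)
    (hs : ¬ G.DisconnectedOn s) (hv : v ∈ s) (hCs : C ⊆ s \ {v})
    (hC : ∀ x ∈ C, ∀ y ∈ s \ {v}, G.Adj x y → y ∈ C) (ht : t ∈ C) (hw : w ∈ s \ {v})
    (hwC : w ∉ C) : G.Adj t v := by
  -- Otherwise `t` has a non-neighbour `p ∈ C` of `v` next to a neighbour `q ∈ C` of `v`, the other
  -- side of `s \ {v}` has a neighbour `z` of `v`, and `p q v z` is an induced P4.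
  by_contra htv
  have fill : ∀ X ⊆ s, X.Nonempty → (∀ x ∈ X, ∀ y ∈ s, G.Adj x y → y ∈ X) → s ⊆ X :=
    fun X hXs hX hXc => by_contra fun hsX => hs ⟨X, hXs, hX, hsX, hXc⟩
  obtain ⟨p, ⟨hpC, hpv⟩, q, hqC, hqv, hpq⟩ :
      ∃ p ∈ {x ∈ C | ¬ G.Adj x v}, ∃ q ∈ C, G.Adj q v ∧ G.Adj p q := by
    by_contra! h
    refine (hCs (fill {x ∈ C | ¬ G.Adj x v} (fun x hx => (hCs hx.1).1) ⟨t, ht, htv⟩ ?_ hv).1).2 rfl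
    rintro x ⟨hxC, hxv⟩ y hy hxy
    have hyC := hC x hxC y ⟨hy, by rintro rfl; exact hxv hxy⟩ hxy
    exact ⟨hyC, fun hyv => h x ⟨hxC, hxv⟩ y hyC hyv hxy⟩
  obtain ⟨z, ⟨hz, hzC⟩, hzv⟩ : ∃ z ∈ (s \ {v}) \ C, G.Adj z v := by
    by_contra! h
    refine (fill ((s \ {v}) \ C) (fun x hx => hx.1.1) ⟨w, hw, hwC⟩ ?_ (hCs ht).1).2 ht
    rintro x ⟨hx, hxC⟩ y hy hxy
    refine ⟨⟨hy, ?_⟩, fun hyC => hxC (hC y hyC x hx hxy.symm)⟩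
    rintro rfl
    exact h x ⟨hx, hxC⟩ hxy
  exact hP p q v z hpq hqv hzv.symm hpv (fun h => hzC (hC p hpC z hz h))
    (fun h => hzC (hC q hqC z hz h))

theorem IsP4Free.disconnectedOn_or_compl_of_diff_singleton {s : Set V} {v : V} (hP : G.IsP4Free)
    (hv : v ∈ s) (h : G.DisconnectedOn (s \ {v})) : G.DisconnectedOn s ∨ Gᶜ.DisconnectedOn s := by
  refine or_iff_not_imp_left.2 fun hs => disconnectedOn_compl_of_forall_adj hv
    (h.nontrivial.mono Set.sdiff_subset) fun t ht htv => ?_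
  obtain ⟨C, hCs, ⟨c, hc⟩, hsC, hC⟩ := h
  obtain ⟨w, hw, hwC⟩ := Set.not_subset.1 hsC
  by_cases htC : t ∈ C
  · exact hP.adj_of_mem_side hs hv hCs hC htC hw hwC
  · refine hP.adj_of_mem_side (C := (s \ {v}) \ C) hs hv Set.sdiff_subset ?_ ⟨⟨ht, htv⟩, htC⟩
      (hCs hc) (fun h => h.2 hc)
    rintro x ⟨hx, hxC⟩ y hy hxy
    exact ⟨hy, fun hyC => hxC (hC y hyC x hx hxy.symm)⟩

-- Seinsche's theorem.
theorem IsP4Free.disconnectedOn_or_compl (hP : G.IsP4Free) {s : Set V} (hs : s.Finite)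
    (hnt : s.Nontrivial) : G.DisconnectedOn s ∨ Gᶜ.DisconnectedOn s := by
  induction s, hs using Set.Finite.induction_on with
  | empty => exact absurd hnt Set.not_nontrivial_empty
  | @insert a s ha _ ih =>
    have hdiff : insert a s \ {a} = s := Set.insert_sdiff_self_of_notMem ha
    by_cases hs : s.Nontrivial
    · rcases ih hs with h | h
      · rw [← hdiff] at h
        exact hP.disconnectedOn_or_compl_of_diff_singleton (Set.mem_insert a s) h
      · rw [← hdiff] at h
        have := hP.compl.disconnectedOn_or_compl_of_diff_singleton (Set.mem_insert a s) h
        rwa [compl_compl, or_comm] at this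
    · obtain ⟨b, rfl⟩ : ∃ b, s = {b} := by
        rcases (Set.not_nontrivial_iff.1 hs).eq_empty_or_singleton with rfl | h
        · simp at hnt
        · exact h
      have hba : b ≠ a := fun h => ha (h ▸ rfl)
      have hpair : ∀ t ∈ ({a, b} : Set V), t ≠ a → t = b := by simp +contextual
      by_cases hadj : G.Adj b a
      · exact .inr <| disconnectedOn_compl_of_forall_adj (Set.mem_insert a _) hnt
          fun t ht hta => hpair t ht hta ▸ hadj
      · rw [← compl_compl G]
        exact .inl <| disconnectedOn_compl_of_forall_adj (Set.mem_insert a _) hnt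
          fun t ht hta => hpair t ht hta ▸ (G.compl_adj b a).2 ⟨hba, hadj⟩

end SimpleGraph

namespace PB

variable {A : Type}

structure Embedding (P Q : PB A) where
  toFun : P.Ev → Q.Ev
  injective : Function.Injective toFun
  le_iff : ∀ x y, Q.le (toFun x) (toFun y) ↔ P.le x y
  image_mem_boxes : ∀ B ∈ P.boxes, toFun '' B ∈ Q.boxes

-- An `Iso` packaged with its underlying bijection, so that it can be composed and inverted.
structure Equiv (P Q : PB A) where
  toEquiv : P.Ev ≃ Q.Ev
  lab_apply : ∀ x, Q.lab (toEquiv x) = P.lab x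
  le_iff : ∀ x y, Q.le (toEquiv x) (toEquiv y) ↔ P.le x y
  image_boxes : Set.image toEquiv '' P.boxes = Q.boxes

def unbox (P : PB A) : PB A where
  Ev := P.Ev
  le := P.le
  le_refl := P.le_refl
  le_trans := P.le_trans
  le_antisymm := P.le_antisymm
  lab := P.lab
  boxes := P.boxes \ {Set.univ}
  boxes_ne B hB := P.boxes_ne B hB.1

def Embedding.subtype (P : PB A) (S : Set P.Ev) : (restrictPB P S).Embedding P where
  toFun := Subtype.val
  injective := Subtype.val_injective
  le_iff _ _ := Iff.rfl
  image_mem_boxes _ hB := hB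

def Embedding.unbox (P : PB A) : P.unbox.Embedding P where
  toFun := id
  injective := Function.injective_id
  le_iff _ _ := Iff.rfl
  image_mem_boxes B hB := (Set.image_id B).symm ▸ hB.1

end PB

def Hom.toEmbedding {A : Type} {P Q : PB A} (φ : Hom P Q) (hφ : φ.OrdRefl) : P.Embedding Q where
  toFun := φ.toFun
  injective := φ.bij.injective
  le_iff x y := ⟨hφ x y, φ.mono x y⟩
  image_mem_boxes := φ.box_pres

section Patterns

variable {A : Type} {P Q : PB A}

abbrev PatternFree (P : PB A) : Prop :=
  ¬ hasP1 P ∧ ¬ hasP2 P ∧ ¬ hasP3 P ∧ ¬ hasP4 P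

theorem hasP1.map (f : P.Embedding Q) (h : hasP1 P) : hasP1 Q := by
  obtain ⟨e1, e2, e3, e4, h13, h23, h24, h14, h21, h43⟩ := h
  exact ⟨f.toFun e1, f.toFun e2, f.toFun e3, f.toFun e4, (f.le_iff _ _).2 h13,
    (f.le_iff _ _).2 h23, (f.le_iff _ _).2 h24, mt (f.le_iff _ _).1 h14, mt (f.le_iff _ _).1 h21,
    mt (f.le_iff _ _).1 h43⟩

theorem hasP2.map (f : P.Embedding Q) (h : hasP2 P) : hasP2 Q := by
  obtain ⟨B, C, e1, e2, e3, hB, hC, h1, h2, h3⟩ := h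
  exact ⟨_, _, f.toFun e1, f.toFun e2, f.toFun e3, f.image_mem_boxes B hB,
    f.image_mem_boxes C hC, Set.image_sdiff f.injective B C ▸ Set.mem_image_of_mem _ h1,
    Set.image_inter f.injective ▸ Set.mem_image_of_mem _ h2,
    Set.image_sdiff f.injective C B ▸ Set.mem_image_of_mem _ h3⟩

theorem hasP3.map (f : P.Embedding Q) (h : hasP3 P) : hasP3 Q := by
  obtain ⟨B, e1, e2, e3, hB, h1, h2, h3, h12, h13⟩ := h
  exact ⟨_, f.toFun e1, f.toFun e2, f.toFun e3, f.image_mem_boxes B hB,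
    mt f.injective.mem_set_image.1 h1, Set.mem_image_of_mem _ h2, Set.mem_image_of_mem _ h3,
    (f.le_iff _ _).2 h12, mt (f.le_iff _ _).1 h13⟩

theorem hasP4.map (f : P.Embedding Q) (h : hasP4 P) : hasP4 Q := by
  obtain ⟨B, e1, e2, e3, hB, h1, h2, h3, h21, h31⟩ := h
  exact ⟨_, f.toFun e1, f.toFun e2, f.toFun e3, f.image_mem_boxes B hB,
    mt f.injective.mem_set_image.1 h1, Set.mem_image_of_mem _ h2, Set.mem_image_of_mem _ h3,
    (f.le_iff _ _).2 h21, mt (f.le_iff _ _).1 h31⟩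

theorem PatternFree.comap (f : P.Embedding Q) (h : PatternFree Q) : PatternFree P :=
  ⟨fun h1 => h.1 (h1.map f), fun h2 => h.2.1 (h2.map f), fun h3 => h.2.2.1 (h3.map f),
    fun h4 => h.2.2.2 (h4.map f)⟩

theorem not_hasP1_seqPB (hP : ¬ hasP1 P) (hQ : ¬ hasP1 Q) : ¬ hasP1 (seqPB P Q) := by
  rintro ⟨e1 | e1, e2 | e2, e3 | e3, e4 | e4, h⟩ <;> simp_all [seqPB, seqLE]
  · exact hP ⟨e1, e2, e3, e4, h⟩
  · exact hQ ⟨e1, e2, e3, e4, h⟩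

theorem not_hasP1_parPB (hP : ¬ hasP1 P) (hQ : ¬ hasP1 Q) : ¬ hasP1 (parPB P Q) := by
  rintro ⟨e1 | e1, e2 | e2, e3 | e3, e4 | e4, h⟩ <;> simp_all [parPB, parLE]
  · exact hP ⟨e1, e2, e3, e4, h⟩
  · exact hQ ⟨e1, e2, e3, e4, h⟩

theorem not_hasP2_seqPB (hP : ¬ hasP2 P) (hQ : ¬ hasP2 Q) : ¬ hasP2 (seqPB P Q) := by
  rintro ⟨_, _, e1, e2, e3, ⟨B, hB, rfl⟩ | ⟨B, hB, rfl⟩, ⟨C, hC, rfl⟩ | ⟨C, hC, rfl⟩,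
    ⟨⟨a1, ha1, rfl⟩, h1⟩, ⟨⟨a2, ha2, rfl⟩, h2⟩, ⟨⟨a3, ha3, rfl⟩, h3⟩⟩
  · exact hP ⟨B, C, a1, a2, a3, hB, hC, ⟨ha1, mt Sum.inl_injective.mem_set_image.2 h1⟩,
      ⟨ha2, Sum.inl_injective.mem_set_image.1 h2⟩, ⟨ha3, mt Sum.inl_injective.mem_set_image.2 h3⟩⟩
  · obtain ⟨_, -, h⟩ := h2; exact Sum.inr_ne_inl h
  · obtain ⟨_, -, h⟩ := h2; exact Sum.inl_ne_inr h
  · exact hQ ⟨B, C, a1, a2, a3, hB, hC, ⟨ha1, mt Sum.inr_injective.mem_set_image.2 h1⟩,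
      ⟨ha2, Sum.inr_injective.mem_set_image.1 h2⟩, ⟨ha3, mt Sum.inr_injective.mem_set_image.2 h3⟩⟩

-- `hasP2` only sees the events and the boxes, and these are the same for `seqPB` and `parPB`.
theorem not_hasP2_parPB (hP : ¬ hasP2 P) (hQ : ¬ hasP2 Q) : ¬ hasP2 (parPB P Q) :=
  not_hasP2_seqPB hP hQ

theorem not_hasP3_seqPB (hP : ¬ hasP3 P) (hQ : ¬ hasP3 Q) : ¬ hasP3 (seqPB P Q) := by
  rintro ⟨_, e1 | e1, _, _, ⟨B, hB, rfl⟩ | ⟨B, hB, rfl⟩, h1, ⟨a2, h2, rfl⟩, ⟨a3, h3, rfl⟩, h12, h13⟩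
  · exact hP ⟨B, e1, a2, a3, hB, mt Sum.inl_injective.mem_set_image.2 h1, h2, h3, h12, h13⟩
  · exact h13 trivial
  · exact h12
  · exact hQ ⟨B, e1, a2, a3, hB, mt Sum.inr_injective.mem_set_image.2 h1, h2, h3, h12, h13⟩

theorem not_hasP3_parPB (hP : ¬ hasP3 P) (hQ : ¬ hasP3 Q) : ¬ hasP3 (parPB P Q) := by
  rintro ⟨_, e1 | e1, _, _, ⟨B, hB, rfl⟩ | ⟨B, hB, rfl⟩, h1, ⟨a2, h2, rfl⟩, ⟨a3, h3, rfl⟩, h12, h13⟩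
  · exact hP ⟨B, e1, a2, a3, hB, mt Sum.inl_injective.mem_set_image.2 h1, h2, h3, h12, h13⟩
  · exact h12
  · exact h12
  · exact hQ ⟨B, e1, a2, a3, hB, mt Sum.inr_injective.mem_set_image.2 h1, h2, h3, h12, h13⟩

theorem not_hasP4_seqPB (hP : ¬ hasP4 P) (hQ : ¬ hasP4 Q) : ¬ hasP4 (seqPB P Q) := by
  rintro ⟨_, e1 | e1, _, _, ⟨B, hB, rfl⟩ | ⟨B, hB, rfl⟩, h1, ⟨a2, h2, rfl⟩, ⟨a3, h3, rfl⟩, h21, h31⟩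
  · exact hP ⟨B, e1, a2, a3, hB, mt Sum.inl_injective.mem_set_image.2 h1, h2, h3, h21, h31⟩
  · exact h21
  · exact h31 trivial
  · exact hQ ⟨B, e1, a2, a3, hB, mt Sum.inr_injective.mem_set_image.2 h1, h2, h3, h21, h31⟩

theorem not_hasP4_parPB (hP : ¬ hasP4 P) (hQ : ¬ hasP4 Q) : ¬ hasP4 (parPB P Q) := by
  rintro ⟨_, e1 | e1, _, _, ⟨B, hB, rfl⟩ | ⟨B, hB, rfl⟩, h1, ⟨a2, h2, rfl⟩, ⟨a3, h3, rfl⟩, h21, h31⟩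
  · exact hP ⟨B, e1, a2, a3, hB, mt Sum.inl_injective.mem_set_image.2 h1, h2, h3, h21, h31⟩
  · exact h21
  · exact h21
  · exact hQ ⟨B, e1, a2, a3, hB, mt Sum.inr_injective.mem_set_image.2 h1, h2, h3, h21, h31⟩

theorem not_hasP2_boxPB (h : ¬ hasP2 P) : ¬ hasP2 (boxPB P) := by
  rintro ⟨B, C, e1, e2, e3, hB | ⟨rfl, -⟩, hC | ⟨rfl, -⟩, h1, h2, h3⟩
  · exact h ⟨B, C, e1, e2, e3, hB, hC, h1, h2, h3⟩
  · exact h1.2 trivial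
  all_goals exact h3.2 trivial

theorem not_hasP3_boxPB (h : ¬ hasP3 P) : ¬ hasP3 (boxPB P) := by
  rintro ⟨B, e1, e2, e3, hB | ⟨rfl, -⟩, h1, hr⟩
  · exact h ⟨B, e1, e2, e3, hB, h1, hr⟩
  · exact h1 trivial

theorem not_hasP4_boxPB (h : ¬ hasP4 P) : ¬ hasP4 (boxPB P) := by
  rintro ⟨B, e1, e2, e3, hB | ⟨rfl, -⟩, h1, hr⟩
  · exact h ⟨B, e1, e2, e3, hB, h1, hr⟩
  · exact h1 trivial

theorem patternFree_onePB : PatternFree (onePB A) :=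
  ⟨fun ⟨e, _⟩ => (nomatch e), fun ⟨_, _, _, _, _, hB, _⟩ => hB, fun ⟨_, _, _, _, hB, _⟩ => hB,
    fun ⟨_, _, _, _, hB, _⟩ => hB⟩

theorem patternFree_atomPB (a : A) : PatternFree (atomPB a) :=
  ⟨fun ⟨_, _, _, _, _, _, _, h14, _⟩ => h14 trivial, fun ⟨_, _, _, _, _, hB, _⟩ => hB,
    fun ⟨_, _, _, _, hB, _⟩ => hB, fun ⟨_, _, _, _, hB, _⟩ => hB⟩

theorem PatternFree.seqPB (hP : PatternFree P) (hQ : PatternFree Q) : PatternFree (seqPB P Q) :=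
  ⟨not_hasP1_seqPB hP.1 hQ.1, not_hasP2_seqPB hP.2.1 hQ.2.1, not_hasP3_seqPB hP.2.2.1 hQ.2.2.1,
    not_hasP4_seqPB hP.2.2.2 hQ.2.2.2⟩

theorem PatternFree.parPB (hP : PatternFree P) (hQ : PatternFree Q) : PatternFree (parPB P Q) :=
  ⟨not_hasP1_parPB hP.1 hQ.1, not_hasP2_parPB hP.2.1 hQ.2.1, not_hasP3_parPB hP.2.2.1 hQ.2.2.1,
    not_hasP4_parPB hP.2.2.2 hQ.2.2.2⟩

theorem PatternFree.boxPB (hP : PatternFree P) : PatternFree (boxPB P) :=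
  ⟨hP.1, not_hasP2_boxPB hP.2.1, not_hasP3_boxPB hP.2.2.1, not_hasP4_boxPB hP.2.2.2⟩

theorem patternFree_semT : ∀ t : Term A, PatternFree (semT t)
  | .one => patternFree_onePB
  | .atom a => patternFree_atomPB a
  | .seq s t => (patternFree_semT s).seqPB (patternFree_semT t)
  | .par s t => (patternFree_semT s).parPB (patternFree_semT t)
  | .box s => (patternFree_semT s).boxPB

end Patterns

namespace PB

variable {A : Type} {P Q R P' Q' : PB A}

namespace Equiv

theorem iso (e : P.Equiv Q) : Iso P Q :=
  ⟨⟨e.toEquiv, e.toEquiv.bijective, e.lab_apply, fun x y => (e.le_iff x y).2,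
      fun _ hB => e.image_boxes ▸ Set.mem_image_of_mem _ hB⟩,
    fun x y => (e.le_iff x y).1,
    fun _ hB => (Set.image_injective.2 e.toEquiv.injective).mem_set_image.1 (e.image_boxes ▸ hB)⟩

def trans (e : P.Equiv Q) (f : Q.Equiv R) : P.Equiv R where
  toEquiv := e.toEquiv.trans f.toEquiv
  lab_apply x := (f.lab_apply _).trans (e.lab_apply x)
  le_iff x y := (f.le_iff _ _).trans (e.le_iff x y)
  image_boxes := by
    rw [← f.image_boxes, ← e.image_boxes, Set.image_image]
    simp only [_root_.Equiv.coe_trans, Set.image_comp]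

def symm (e : P.Equiv Q) : Q.Equiv P where
  toEquiv := e.toEquiv.symm
  lab_apply y := by simpa using (e.lab_apply (e.toEquiv.symm y)).symm
  le_iff x y := by simpa using (e.le_iff (e.toEquiv.symm x) (e.toEquiv.symm y)).symm
  image_boxes := by
    rw [← e.image_boxes, Set.image_image]
    simp only [_root_.Equiv.symm_image_image, Set.image_id']

theorem image_sumCongr_boxes (e : P.Equiv P') (f : Q.Equiv Q') :
    Set.image (e.toEquiv.sumCongr f.toEquiv) ''
        (Set.image Sum.inl '' P.boxes ∪ Set.image Sum.inr '' Q.boxes) =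
      Set.image Sum.inl '' P'.boxes ∪ Set.image Sum.inr '' Q'.boxes := by
  simp only [Set.image_union, Set.image_image, ← e.image_boxes, ← f.image_boxes]
  rfl

def seqCongr (e : P.Equiv P') (f : Q.Equiv Q') : (seqPB P Q).Equiv (seqPB P' Q') where
  toEquiv := e.toEquiv.sumCongr f.toEquiv
  lab_apply := by rintro (x | x); exacts [e.lab_apply x, f.lab_apply x]
  le_iff := by rintro (x | x) (y | y); exacts [e.le_iff x y, Iff.rfl, Iff.rfl, f.le_iff x y]
  image_boxes := image_sumCongr_boxes e f

def parCongr (e : P.Equiv P') (f : Q.Equiv Q') : (parPB P Q).Equiv (parPB P' Q') where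
  toEquiv := e.toEquiv.sumCongr f.toEquiv
  lab_apply := by rintro (x | x); exacts [e.lab_apply x, f.lab_apply x]
  le_iff := by rintro (x | x) (y | y); exacts [e.le_iff x y, Iff.rfl, Iff.rfl, f.le_iff x y]
  image_boxes := image_sumCongr_boxes e f

def boxCongr (e : P.Equiv Q) : (boxPB P).Equiv (boxPB Q) where
  toEquiv := e.toEquiv
  lab_apply := e.lab_apply
  le_iff := e.le_iff
  image_boxes := by
    change Set.image e.toEquiv '' (P.boxes ∪ _) = Q.boxes ∪ _
    rw [Set.image_union, e.image_boxes]
    congr 1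
    ext B
    constructor
    · rintro ⟨_, ⟨rfl, hne⟩, rfl⟩
      exact ⟨Set.image_univ_of_surjective e.toEquiv.surjective, hne.image _⟩
    · rintro ⟨rfl, y, -⟩
      exact ⟨Set.univ, ⟨rfl, e.toEquiv.symm y, trivial⟩,
        Set.image_univ_of_surjective e.toEquiv.surjective⟩

def ofUnivMemBoxes (hu : Set.univ ∈ P.boxes) : P.Equiv (boxPB P.unbox) where
  toEquiv := .refl P.Ev
  lab_apply _ := rfl
  le_iff _ _ := Iff.rfl
  image_boxes := by
    change Set.image id '' P.boxes = P.boxes \ {Set.univ} ∪ {B | B = Set.univ ∧ B.Nonempty}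
    rw [show Set.image (id : P.Ev → P.Ev) = id from funext Set.image_id, Set.image_id]
    ext B
    by_cases hB : B = Set.univ
    · subst hB
      simpa [hu] using P.boxes_ne _ hu
    · simp [hB]

def ofIsEmpty (P : PB A) [IsEmpty P.Ev] : P.Equiv (onePB A) where
  toEquiv := _root_.Equiv.equivPEmpty P.Ev
  lab_apply x := isEmptyElim x
  le_iff x := isEmptyElim x
  image_boxes := by
    rw [Set.eq_empty_of_forall_notMem fun B hB => (P.boxes_ne B hB).ne_empty B.eq_empty_of_isEmpty]
    exact Set.image_empty _

def ofSubsingleton (P : PB A) [Subsingleton P.Ev] (x : P.Ev) (hu : Set.univ ∉ P.boxes) :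
    P.Equiv (atomPB (P.lab x)) where
  toEquiv := @_root_.Equiv.equivPUnit _ (uniqueOfSubsingleton x)
  lab_apply y := congrArg P.lab (Subsingleton.elim x y)
  le_iff y z := iff_of_true trivial (Subsingleton.elim y z ▸ P.le_refl y)
  image_boxes := by
    rw [Set.eq_empty_of_forall_notMem fun B hB =>
      hu (Subsingleton.eq_univ_of_nonempty (P.boxes_ne B hB) ▸ hB)]
    exact Set.image_empty _

theorem image_sumCompl_boxes {S : Set P.Ev} [DecidablePred (· ∈ S)] (hS : Nested P S) :
    Set.image (Equiv.Set.sumCompl S) ''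
        (Set.image Sum.inl '' (restrictPB P S).boxes ∪
          Set.image Sum.inr '' (restrictPB P Sᶜ).boxes) =
      P.boxes := by
  change Set.image _ '' (Set.image Sum.inl '' (Set.image Subtype.val ⁻¹' P.boxes) ∪
    Set.image Sum.inr '' (Set.image Subtype.val ⁻¹' P.boxes)) = P.boxes
  simp only [Set.image_union, Set.image_image, _root_.Equiv.Set.sumCompl_apply_inl,
    _root_.Equiv.Set.sumCompl_apply_inr]
  change Set.image Subtype.val '' (Set.image Subtype.val ⁻¹' P.boxes) ∪
    Set.image Subtype.val '' (Set.image Subtype.val ⁻¹' P.boxes) = P.boxes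
  simp only [Set.image_preimage_eq_inter_range, Set.range_image, Subtype.range_coe,
    ← Set.inter_union_distrib_left, Set.inter_eq_left]
  intro B hB
  exact (hS B hB).imp id fun h =>
    Set.subset_compl_iff_disjoint_right.2 (Set.disjoint_iff_inter_eq_empty.2 h)

open scoped Classical in
noncomputable def ofIsPrefix {S : Set P.Ev} (hN : Nested P S) (hS : IsPrefix P S) :
    P.Equiv (seqPB (restrictPB P S) (restrictPB P Sᶜ)) :=
  symm
    { toEquiv := _root_.Equiv.Set.sumCompl S
      lab_apply := by rintro (x | x) <;> rfl
      le_iff := by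
        rintro (⟨x, hx⟩ | ⟨x, hx⟩) (⟨y, hy⟩ | ⟨y, hy⟩)
        · rfl
        · exact iff_of_true (hS x hx y hy) trivial
        · exact iff_of_false (fun h => hx (P.le_antisymm x y h (hS y hy x hx) ▸ hy)) id
        · rfl
      image_boxes := image_sumCompl_boxes hN }

open scoped Classical in
noncomputable def ofIsolated {S : Set P.Ev} (hN : Nested P S) (hS : Isolated P S) :
    P.Equiv (parPB (restrictPB P S) (restrictPB P Sᶜ)) :=
  symm
    { toEquiv := _root_.Equiv.Set.sumCompl S
      lab_apply := by rintro (x | x) <;> rfl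
      le_iff := by
        rintro (⟨x, hx⟩ | ⟨x, hx⟩) (⟨y, hy⟩ | ⟨y, hy⟩)
        · rfl
        · exact iff_of_false (hS x hx y hy).1 id
        · exact iff_of_false (hS y hy x hx).2 id
        · rfl
      image_boxes := image_sumCompl_boxes hN }

end Equiv
end PB

section BoxClasses

variable {A : Type} {P : PB A} {x y z : P.Ev}

def Comparable (P : PB A) (x y : P.Ev) : Prop := P.le x y ∨ P.le y x

def SameBox (P : PB A) (x y : P.Ev) : Prop := x = y ∨ ∃ B ∈ P.boxes, x ∈ B ∧ y ∈ B

def SepComparable (P : PB A) (x y : P.Ev) : Prop := ¬ SameBox P x y ∧ Comparable P x y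

theorem Comparable.symm (h : Comparable P x y) : Comparable P y x := Or.symm h

theorem SameBox.refl (x : P.Ev) : SameBox P x x := .inl rfl

theorem SameBox.symm (h : SameBox P x y) : SameBox P y x :=
  h.imp Eq.symm fun ⟨B, hB, hx, hy⟩ => ⟨B, hB, hy, hx⟩

theorem subset_or_subset_or_disjoint_of_not_hasP2 (h2 : ¬ hasP2 P) {B C : Set P.Ev}
    (hB : B ∈ P.boxes) (hC : C ∈ P.boxes) : B ⊆ C ∨ C ⊆ B ∨ Disjoint B C := by
  by_contra! h
  obtain ⟨hBC, hCB, hBC'⟩ := h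
  obtain ⟨x, hxB, hxC⟩ := Set.not_subset.1 hBC
  obtain ⟨z, hzC, hzB⟩ := Set.not_subset.1 hCB
  obtain ⟨y, hyB, hyC⟩ := Set.not_disjoint_iff.1 hBC'
  exact h2 ⟨B, C, x, y, z, hB, hC, ⟨hxB, hxC⟩, ⟨hyB, hyC⟩, ⟨hzC, hzB⟩⟩

theorem SameBox.trans (h2 : ¬ hasP2 P) (hxy : SameBox P x y) (hyz : SameBox P y z) :
    SameBox P x z := by
  rcases hxy with rfl | ⟨B, hB, hxB, hyB⟩
  · exact hyz
  rcases hyz with rfl | ⟨C, hC, hyC, hzC⟩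
  · exact .inr ⟨B, hB, hxB, hyB⟩
  rcases subset_or_subset_or_disjoint_of_not_hasP2 h2 hB hC with hBC | hCB | hBC
  · exact .inr ⟨C, hC, hBC hxB, hzC⟩
  · exact .inr ⟨B, hB, hxB, hCB hzC⟩
  · exact (Set.disjoint_left.1 hBC hyB hyC).elim

def boxSetoid (h2 : ¬ hasP2 P) : Setoid P.Ev where
  r := SameBox P
  iseqv := ⟨SameBox.refl, SameBox.symm, SameBox.trans h2⟩

theorem le_of_le_of_mem_box (h3 : ¬ hasP3 P) {B : Set P.Ev} (hB : B ∈ P.boxes) (hx : x ∈ B)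
    (hy : y ∈ B) (hz : z ∉ B) (h : P.le z x) : P.le z y :=
  by_contra fun h' => h3 ⟨B, z, x, y, hB, hz, hx, hy, h, h'⟩

theorem le_of_mem_box_of_le (h4 : ¬ hasP4 P) {B : Set P.Ev} (hB : B ∈ P.boxes) (hx : x ∈ B)
    (hy : y ∈ B) (hz : z ∉ B) (h : P.le x z) : P.le y z :=
  by_contra fun h' => h4 ⟨B, z, x, y, hB, hz, hx, hy, h, h'⟩

theorem Comparable.of_sameBox_left {x' : P.Ev} (h3 : ¬ hasP3 P) (h4 : ¬ hasP4 P)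
    (hxx' : SameBox P x x') (hxz : ¬ SameBox P x z) (h : Comparable P x z) :
    Comparable P x' z := by
  rcases hxx' with rfl | ⟨B, hB, hx, hx'⟩
  · exact h
  have hz : z ∉ B := fun hz => hxz (.inr ⟨B, hB, hx, hz⟩)
  exact h.imp (le_of_mem_box_of_le h4 hB hx hx' hz) (le_of_le_of_mem_box h3 hB hx hx' hz)

theorem SepComparable.symm (h : SepComparable P x y) : SepComparable P y x :=
  ⟨fun h' => h.1 h'.symm, h.2.symm⟩

theorem SepComparable.of_sameBox {a b a' b' : P.Ev} (h2 : ¬ hasP2 P) (h3 : ¬ hasP3 P)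
    (h4 : ¬ hasP4 P) (ha : SameBox P a a') (hb : SameBox P b b') (h : SepComparable P a b) :
    SepComparable P a' b' := by
  have ha'b : ¬ SameBox P a' b := fun h' => h.1 (ha.trans h2 h')
  refine ⟨fun h' => ha'b (h'.trans h2 hb.symm), ?_⟩
  have := (h.2.of_sameBox_left h3 h4 ha h.1).symm
  exact (this.of_sameBox_left h3 h4 hb fun h' => ha'b h'.symm).symm

theorem hasP1_of_comparable_path {a b c d : P.Ev} (hab : Comparable P a b)
    (hbc : Comparable P b c) (hcd : Comparable P c d) (hac : ¬ Comparable P a c)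
    (had : ¬ Comparable P a d) (hbd : ¬ Comparable P b d) : hasP1 P := by
  rcases hab with hab | hba
  · have hcb : P.le c b := hbc.resolve_left fun h => hac (.inl (P.le_trans _ _ _ hab h))
    have hcd : P.le c d := hcd.resolve_right fun h => hbd (.inr (P.le_trans _ _ _ h hcb))
    exact ⟨a, c, b, d, hab, hcb, hcd, fun h => had (.inl h), fun h => hac (.inr h),
      fun h => hbd (.inr h)⟩
  · have hbc : P.le b c := hbc.resolve_right fun h => hac (.inr (P.le_trans _ _ _ h hba))
    have hdc : P.le d c := hcd.resolve_left fun h => hbd (.inl (P.le_trans _ _ _ hbc h))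
    exact ⟨d, b, c, a, hdc, hbc, hba, fun h => had (.inr h), fun h => hbd (.inl h),
      fun h => hac (.inl h)⟩

def boxClassGraph (h2 : ¬ hasP2 P) (h3 : ¬ hasP3 P) (h4 : ¬ hasP4 P) :
    SimpleGraph (Quotient (boxSetoid h2)) where
  Adj := Quotient.lift₂ (SepComparable P) fun _ _ _ _ ha hb =>
    propext ⟨SepComparable.of_sameBox h2 h3 h4 ha hb,
      SepComparable.of_sameBox h2 h3 h4 ha.symm hb.symm⟩
  symm := ⟨by rintro ⟨x⟩ ⟨y⟩ h; exact SepComparable.symm h⟩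
  loopless := ⟨by rintro ⟨x⟩ h; exact h.1 (.refl x)⟩

theorem boxClassGraph_isP4Free (h1 : ¬ hasP1 P) (h2 : ¬ hasP2 P) (h3 : ¬ hasP3 P)
    (h4 : ¬ hasP4 P) : (boxClassGraph h2 h3 h4).IsP4Free := by
  rintro ⟨a⟩ ⟨b⟩ ⟨c⟩ ⟨d⟩ (hab : SepComparable P a b) (hbc : SepComparable P b c)
    (hcd : SepComparable P c d) (hac : ¬ SepComparable P a c) (had : ¬ SepComparable P a d)
    (hbd : ¬ SepComparable P b d)
  refine h1 (hasP1_of_comparable_path hab.2 hbc.2 hcd.2 (fun h => hac ⟨fun hs => had ?_, h⟩)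
    (fun h => had ⟨fun hs => hac ?_, h⟩) (fun h => hbd ⟨fun hs => had ?_, h⟩))
  · exact hcd.of_sameBox h2 h3 h4 hs.symm (.refl d)
  · exact (hcd.of_sameBox h2 h3 h4 (.refl c) hs.symm).symm
  · exact hab.of_sameBox h2 h3 h4 (.refl a) hs

end BoxClasses

section Decomposition

variable {A : Type} {P : PB A}

theorem univ_mem_boxes_of_forall_sameBox [Finite P.Ev] (h2 : ¬ hasP2 P)
    (h : ∀ x y, SameBox P x y) {x y : P.Ev} (hxy : x ≠ y) : Set.univ ∈ P.boxes := by
  obtain ⟨B, ⟨hB, hxB⟩, hmax⟩ : ∃ B, Maximal (· ∈ {B | B ∈ P.boxes ∧ x ∈ B}) B := by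
    refine (Set.toFinite _).exists_maximal ?_
    obtain ⟨B, hB, hxB, -⟩ := (h x y).resolve_left hxy
    exact ⟨B, hB, hxB⟩
  suffices B = Set.univ from this ▸ hB
  refine Set.eq_univ_of_forall fun z => ?_
  rcases h x z with rfl | ⟨C, hC, hxC, hzC⟩
  · exact hxB
  rcases subset_or_subset_or_disjoint_of_not_hasP2 h2 hB hC with hBC | hCB | hBC
  · exact hmax ⟨hC, hxC⟩ hBC hzC
  · exact hCB hzC
  · exact (Set.disjoint_left.1 hBC hxB hxC).elim

theorem le_of_le_of_not_sepComparable {y' : P.Ev} (h3 : ¬ hasP3 P)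
    (hyy' : ¬ SepComparable P y y') (hy'z : SepComparable P y' z) (hzy : P.le z y) :
    P.le z y' := by
  rcases not_and_or.1 hyy' with hs | hc
  · rcases not_not.1 hs with rfl | ⟨B, hB, hy, hy'⟩
    · exact hzy
    exact le_of_le_of_mem_box h3 hB hy hy' (fun hz => hy'z.1 (.inr ⟨B, hB, hy', hz⟩)) hzy
  · exact hy'z.2.resolve_left fun h => hc (.inr (P.le_trans _ _ _ h hzy))

theorem exists_isPrefix (h3 : ¬ hasP3 P) (h4 : ¬ hasP4 P) {x w : P.Ev}
    (hxw : ¬ Relation.ReflTransGen (fun a b => ¬ SepComparable P a b) x w) (hwx : P.le w x) :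
    ∃ S, NonTrivial P S ∧ Nested P S ∧ IsPrefix P S := by
  -- `R` is the component of `x` in the complement of `SepComparable`: every event outside `R` is
  -- comparable with all of `R`, and lies below all of `R` once it lies below `x`.
  set R := {y | Relation.ReflTransGen (fun a b => ¬ SepComparable P a b) x y}
  have hR : ∀ y ∈ R, ∀ z ∉ R, SepComparable P y z := fun y hy z hz =>
    by_contra fun h => hz (Relation.ReflTransGen.tail hy h)
  have below : ∀ z ∉ R, P.le z x → ∀ y ∈ R, P.le z y := by
    intro z hz hzx y hy
    induction hy with
    | refl => exact hzx
    | tail hy hyy' ih => exact le_of_le_of_not_sepComparable h3 hyy' (hR _ (hy.tail hyy') z hz) ih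
  refine ⟨{z | P.le z x ∧ z ∉ R}, ⟨Set.nonempty_iff_ne_empty.1 ⟨w, hwx, hxw⟩, fun h => ?_⟩, ?_, ?_⟩
  · exact (h ▸ Set.mem_univ x : x ∈ {z | P.le z x ∧ z ∉ R}).2 .refl
  · intro B hB
    by_cases hBS : ∃ y ∈ B, P.le y x ∧ y ∉ R
    · obtain ⟨y, hyB, hyx, hyR⟩ := hBS
      refine .inl fun y' hy'B =>
        ⟨?_, fun hy' => hyR (hy'.tail fun h => h.1 (.inr ⟨B, hB, hy'B, hyB⟩))⟩
      have hxB : x ∉ B := fun hxB => hyR (.single fun h => h.1 (.inr ⟨B, hB, hxB, hyB⟩))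
      exact le_of_mem_box_of_le h4 hB hyB hy'B hxB hyx
    · exact .inr (Set.eq_empty_of_forall_notMem fun y hy => hBS ⟨y, hy⟩)
  · rintro e ⟨hex, heR⟩ f hf
    by_cases hfR : f ∈ R
    · exact below e heR hex f hfR
    · have hxf := (hR x .refl f hfR).2.resolve_right fun h => hf ⟨h, hfR⟩
      exact P.le_trans _ _ _ hex hxf

theorem nested_preimage_mk (h2 : ¬ hasP2 P) (T : Set (Quotient (boxSetoid h2))) :
    Nested P (Quotient.mk _ ⁻¹' T) := by
  intro B hB
  by_cases h : ∃ y ∈ B, Quotient.mk _ y ∈ T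
  · obtain ⟨y, hyB, hy⟩ := h
    exact .inl fun z hz =>
      (Quotient.sound (s := boxSetoid h2) (.inr ⟨B, hB, hyB, hz⟩) ▸ hy : Quotient.mk _ z ∈ T)
  · exact .inr (Set.eq_empty_of_forall_notMem fun z hz => h ⟨z, hz⟩)

theorem exists_isolated_of_disconnectedOn (h2 : ¬ hasP2 P) (h3 : ¬ hasP3 P) (h4 : ¬ hasP4 P)
    (h : (boxClassGraph h2 h3 h4).DisconnectedOn Set.univ) :
    ∃ S, NonTrivial P S ∧ Nested P S ∧ Isolated P S := by
  obtain ⟨T, -, ⟨⟨p⟩, hp⟩, hTu, hT⟩ := h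
  obtain ⟨⟨q⟩, -, hq⟩ := Set.not_subset.1 hTu
  refine ⟨_, ⟨Set.nonempty_iff_ne_empty.1 ⟨p, hp⟩, fun h => hq (h ▸ Set.mem_univ q : q ∈ _)⟩,
    nested_preimage_mk h2 T, fun e he f hf => ?_⟩
  have hsep : ¬ SepComparable P e f := fun h => hf (hT _ he _ trivial h)
  have hnb : ¬ SameBox P e f := fun h => hf (Quotient.sound (s := boxSetoid h2) h ▸ he : _ ∈ T)
  exact ⟨fun h => hsep ⟨hnb, .inl h⟩, fun h => hsep ⟨hnb, .inr h⟩⟩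

theorem exists_isPrefix_of_disconnectedOn_compl (h2 : ¬ hasP2 P) (h3 : ¬ hasP3 P)
    (h4 : ¬ hasP4 P) (h : (boxClassGraph h2 h3 h4)ᶜ.DisconnectedOn Set.univ) :
    ∃ S, NonTrivial P S ∧ Nested P S ∧ IsPrefix P S := by
  obtain ⟨T, -, ⟨⟨p⟩, hp⟩, hTu, hT⟩ := h
  obtain ⟨⟨q⟩, -, hq⟩ := Set.not_subset.1 hTu
  have hT' : ∀ a b, Relation.ReflTransGen (fun a b => ¬ SepComparable P a b) a b →
      (Quotient.mk (boxSetoid h2) a ∈ T ↔ Quotient.mk _ b ∈ T) := by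
    intro a b hab
    induction hab with
    | refl => exact Iff.rfl
    | @tail b c _ hbc ih =>
      refine ih.trans ?_
      by_cases hbc' : Quotient.mk (boxSetoid h2) b = Quotient.mk _ c
      · rw [hbc']
      · have hadj : (boxClassGraph h2 h3 h4)ᶜ.Adj ⟦b⟧ ⟦c⟧ := ⟨hbc', hbc⟩
        exact ⟨fun h => hT _ h _ trivial hadj, fun h => hT _ h _ trivial hadj.symm⟩
  have hpq : SepComparable P p q := by_contra fun h => hq ((hT' p q (.single h)).1 hp)
  rcases hpq.2 with h | h
  · exact exists_isPrefix h3 h4 (fun h' => hq ((hT' _ _ h').2 hp)) h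
  · exact exists_isPrefix h3 h4 (fun h' => hq ((hT' _ _ h').1 hp)) h

theorem exists_nested_isolated_or_isPrefix [Finite P.Ev] [Nontrivial P.Ev] (hP : PatternFree P)
    (hu : Set.univ ∉ P.boxes) :
    ∃ S, NonTrivial P S ∧ Nested P S ∧ (Isolated P S ∨ IsPrefix P S) := by
  obtain ⟨h1, h2, h3, h4⟩ := hP
  have : Nontrivial (Quotient (boxSetoid h2)) := by
    obtain ⟨x, y, hxy⟩ := exists_pair_ne P.Ev
    by_contra! h
    exact hu (univ_mem_boxes_of_forall_sameBox h2 (fun a b => Quotient.exact (h.elim ⟦a⟧ ⟦b⟧)) hxy)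
  rcases (boxClassGraph_isP4Free h1 h2 h3 h4).disconnectedOn_or_compl Set.finite_univ
    Set.nontrivial_univ with h | h
  · obtain ⟨S, hS, hN, hI⟩ := exists_isolated_of_disconnectedOn h2 h3 h4 h
    exact ⟨S, hS, hN, .inl hI⟩
  · obtain ⟨S, hS, hN, hI⟩ := exists_isPrefix_of_disconnectedOn_compl h2 h3 h4 h
    exact ⟨S, hS, hN, .inr hI⟩

theorem exists_equiv_semT_of_univ_notMem [Finite P.Ev] (hP : PatternFree P)
    (hu : Set.univ ∉ P.boxes)
    (ih : ∀ S : Set P.Ev, S ≠ Set.univ → ∃ t, Nonempty ((restrictPB P S).Equiv (semT t))) :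
    ∃ t, Nonempty (P.Equiv (semT t)) := by
  rcases subsingleton_or_nontrivial P.Ev with _ | _
  · rcases isEmpty_or_nonempty P.Ev with _ | ⟨⟨x⟩⟩
    · exact ⟨.one, ⟨.ofIsEmpty P⟩⟩
    · exact ⟨.atom (P.lab x), ⟨.ofSubsingleton P x hu⟩⟩
  obtain ⟨S, ⟨hSe, hSu⟩, hN, hS⟩ := exists_nested_isolated_or_isPrefix hP hu
  obtain ⟨t₁, ⟨e₁⟩⟩ := ih S hSu
  obtain ⟨t₂, ⟨e₂⟩⟩ := ih Sᶜ fun h => hSe (Set.compl_univ_iff.1 h)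
  rcases hS with hS | hS
  · exact ⟨.par t₁ t₂, ⟨(PB.Equiv.ofIsolated hN hS).trans (e₁.parCongr e₂)⟩⟩
  · exact ⟨.seq t₁ t₂, ⟨(PB.Equiv.ofIsPrefix hN hS).trans (e₁.seqCongr e₂)⟩⟩

theorem exists_equiv_semT (P : PB A) [Finite P.Ev] (hP : PatternFree P) :
    ∃ t, Nonempty (P.Equiv (semT t)) := by
  induction hn : Nat.card P.Ev using Nat.strong_induction_on generalizing P with
  | _ n ih =>
  have ih' (Q : PB A) [Finite Q.Ev] (hQ : PatternFree Q) (hQn : Nat.card Q.Ev = n) (S : Set Q.Ev)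
      (hS : S ≠ Set.univ) : ∃ t, Nonempty ((restrictPB Q S).Equiv (semT t)) := by
    have : Finite (restrictPB Q S).Ev := inferInstanceAs (Finite S)
    obtain ⟨x, hx⟩ := (Set.ne_univ_iff_exists_notMem S).1 hS
    exact ih _ (hQn ▸ Finite.card_subtype_lt hx) _ (hQ.comap (PB.Embedding.subtype Q S)) rfl
  by_cases hu : Set.univ ∈ P.boxes
  · have : Finite P.unbox.Ev := inferInstanceAs (Finite P.Ev)
    obtain ⟨t, ⟨e⟩⟩ := exists_equiv_semT_of_univ_notMem (hP.comap (PB.Embedding.unbox P))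
      (fun h => h.2 rfl) (ih' P.unbox (hP.comap (PB.Embedding.unbox P)) hn)
    exact ⟨.box t, ⟨(PB.Equiv.ofUnivMemBoxes hu).trans e.boxCongr⟩⟩
  · exact exists_equiv_semT_of_univ_notMem hP hu (ih' P hP hn)

end Decomposition

/-- Characterization of series–parallel pomsets with boxes: a finite pomset with
boxes is series–parallel iff it contains none of the four forbidden patterns. -/
theorem sp_characterization (A : Type) (P : PB A) (hfin : Finite P.Ev) :
    (∃ t : Term A, Iso P (semT t)) ↔
      (¬ hasP1 P ∧ ¬ hasP2 P ∧ ¬ hasP3 P ∧ ¬ hasP4 P) := by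
  constructor
  · rintro ⟨t, φ, hφ, -⟩
    exact (patternFree_semT t).comap (φ.toEmbedding hφ)
  · intro hP
    obtain ⟨t, ⟨e⟩⟩ := exists_equiv_semT P hP
    exact ⟨t, e.iso⟩
end

section
/- Soundness and completeness of the bimonoid-with-boxes axioms for isomorphism: for any terms s, t over {1, atoms, ·, ∥, [−]}, the interpretations of s and t are isomorphic posets with boxes if and only if s = t is derivable from the axioms: associativity of ·, associativity and commutativity of ∥, 1 a unit for both products, [[s]] = [s], and [1] = 1. -/
/-!
Soundness: each axiom is witnessed by the evident bijection of events (associator,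
symmetry and unitors of `⊕`, identity for the box axioms), and these bijections are
compatible with the three constructions.

Completeness: every term is derivably equal to a normal one, in which `1` occurs only at
the top and no box sits directly inside another. A normal term other than `1` has events,
and its full event set is a box exactly when the term is a box. Given an isomorphism
`s ≅ t` with `s` normal, induct on `s`. For `s = s₁ · s₂`, the image in `t` of the events
of `s₁` is a prefix set that no box straddles; such a set `S` splits any normal `t`
derivably as `t₁ · t₂`, with `t₁` carrying `S` and `t₂` its complement (induction on `t`:
in `w₁ · w₂` split both factors and recombine, which is possible because `S` contains all
of `w₁` or none of `w₂`). For `∥` the same works with sets incomparable to their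
complement, recombining by `(a ∥ b) ∥ (c ∥ d) = (a ∥ c) ∥ (b ∥ d)`. For `s = [s']`, the
full event set is a box of `t`, so `t = [t']`, and removing that box gives `s' ≅ t'`.
-/

open Set

section Completeness

variable {A : Type}

theorem Equiv.image_image_eq_iff {α β : Type*} (g : α ≃ β) {F : Set (Set α)}
    {G : Set (Set β)} : (g '' ·) '' F = G ↔ ∀ B, g '' B ∈ G ↔ B ∈ F := by
  constructor
  · rintro rfl B
    exact (image_injective.2 g.injective).mem_set_image
  · intro h
    ext X
    rw [← g.image_symm_image X, h, (image_injective.2 g.injective).mem_set_image]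

theorem Equiv.image_eq_univ_iff {α β : Type*} (g : α ≃ β) {B : Set α} :
    g '' B = univ ↔ B = univ := by
  rw [← image_univ_of_surjective g.surjective, (image_injective.2 g.injective).eq_iff]

section SumBoxes

variable {α α' β β' γ : Type*}

def sumBoxes (F : Set (Set α)) (G : Set (Set β)) : Set (Set (α ⊕ β)) :=
  (Sum.inl '' ·) '' F ∪ (Sum.inr '' ·) '' G

theorem mem_sumBoxes_iff {F : Set (Set α)} {G : Set (Set β)} {X : Set (α ⊕ β)} :
    X ∈ sumBoxes F G ↔
      Sum.inl ⁻¹' X ∈ F ∧ Sum.inr ⁻¹' X = ∅ ∨ Sum.inr ⁻¹' X ∈ G ∧ Sum.inl ⁻¹' X = ∅ := by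
  constructor
  · rintro (⟨C, hC, rfl⟩ | ⟨C, hC, rfl⟩)
    · simp [preimage_image_eq _ Sum.inl_injective, hC]
    · simp [preimage_image_eq _ Sum.inr_injective, hC]
  · rintro (⟨hX, h⟩ | ⟨hX, h⟩) <;> rw [← image_preimage_inl_union_image_preimage_inr X, h]
    · exact Or.inl ⟨_, hX, by simp⟩
    · exact Or.inr ⟨_, hX, by simp⟩

theorem univ_notMem_sumBoxes [Nonempty α] [Nonempty β] {F : Set (Set α)}
    {G : Set (Set β)} : univ ∉ sumBoxes F G := fun h => by
  rcases mem_sumBoxes_iff.1 h with ⟨-, h⟩ | ⟨-, h⟩ <;> simp at h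

theorem image_image_sumMap_sumBoxes (f : α → α') (g : β → β') (F : Set (Set α))
    (G : Set (Set β)) :
    (Sum.map f g '' ·) '' sumBoxes F G = sumBoxes ((f '' ·) '' F) ((g '' ·) '' G) := by
  simp [sumBoxes, image_union, image_image]

theorem image_image_sumAssoc_symm_sumBoxes (F : Set (Set α)) (G : Set (Set β))
    (H : Set (Set γ)) :
    ((Equiv.sumAssoc α β γ).symm '' ·) '' sumBoxes F (sumBoxes G H) =
      sumBoxes (sumBoxes F G) H := by
  simp [sumBoxes, image_union, image_image, union_assoc]

theorem image_image_sumComm_sumBoxes (F : Set (Set α)) (G : Set (Set β)) :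
    (Equiv.sumComm α β '' ·) '' sumBoxes F G = sumBoxes G F := by
  simp [sumBoxes, image_union, image_image, union_comm]

theorem image_image_emptySum_sumBoxes [IsEmpty α] (G : Set (Set β)) :
    (Equiv.emptySum α β '' ·) '' sumBoxes ∅ G = G := by
  simp [sumBoxes, image_image]

theorem image_image_sumEmpty_sumBoxes [IsEmpty β] (F : Set (Set α)) :
    (Equiv.sumEmpty α β '' ·) '' sumBoxes F ∅ = F := by
  simp [sumBoxes, image_image]

theorem preimage_inl_image_sumMap (f : α → α') (g : β → β') (X : Set (α ⊕ β)) :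
    Sum.inl ⁻¹' (Sum.map f g '' X) = f '' (Sum.inl ⁻¹' X) := by
  ext; simp

theorem preimage_inr_image_sumMap (f : α → α') (g : β → β') (X : Set (α ⊕ β)) :
    Sum.inr ⁻¹' (Sum.map f g '' X) = g '' (Sum.inr ⁻¹' X) := by
  ext; simp

theorem image_subtypeSum_mem_sumBoxes_iff {S : Set (α ⊕ β)} {F : Set (Set α)}
    {G : Set (Set β)} (B : Set S) :
    Equiv.subtypeSum '' B ∈ sumBoxes {C : Set (Sum.inl ⁻¹' S) | Subtype.val '' C ∈ F}
        {C : Set (Sum.inr ⁻¹' S) | Subtype.val '' C ∈ G} ↔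
      Subtype.val '' B ∈ sumBoxes F G := by
  have hB : Subtype.val '' B = Sum.map Subtype.val Subtype.val '' (Equiv.subtypeSum '' B) := by
    rw [image_image]
    congr 1
    funext x
    rcases x with ⟨x | x, _⟩ <;> rfl
  simp only [mem_sumBoxes_iff, hB, preimage_inl_image_sumMap, preimage_inr_image_sumMap,
    image_eq_empty]
  exact Iff.rfl

end SumBoxes

structure PBEquiv (P Q : PB A) where
  toEquiv : P.Ev ≃ Q.Ev
  lab_apply : ∀ x, Q.lab (toEquiv x) = P.lab x
  le_iff : ∀ x y, Q.le (toEquiv x) (toEquiv y) ↔ P.le x y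
  image_boxes : (toEquiv '' ·) '' P.boxes = Q.boxes

infixl:25 " ≃ᵇ " => PBEquiv

instance : IsEmpty (onePB A).Ev := inferInstanceAs (IsEmpty PEmpty)

theorem univ_mem_boxPB {P : PB A} [Nonempty P.Ev] : univ ∈ (boxPB P).boxes :=
  Or.inr ⟨rfl, univ_nonempty⟩

namespace PBEquiv

variable {P P' Q Q' R : PB A}

theorem image_mem_boxes (e : P ≃ᵇ Q) (B : Set P.Ev) : e.toEquiv '' B ∈ Q.boxes ↔ B ∈ P.boxes :=
  e.toEquiv.image_image_eq_iff.1 e.image_boxes B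

def refl (P : PB A) : P ≃ᵇ P where
  toEquiv := Equiv.refl _
  lab_apply _ := rfl
  le_iff _ _ := Iff.rfl
  image_boxes := by simp

def symm (e : P ≃ᵇ Q) : Q ≃ᵇ P where
  toEquiv := e.toEquiv.symm
  lab_apply x := by rw [← e.lab_apply, e.toEquiv.apply_symm_apply]
  le_iff x y := by rw [← e.le_iff, e.toEquiv.apply_symm_apply, e.toEquiv.apply_symm_apply]
  image_boxes := by simp [← e.image_boxes, image_image]

def trans (e : P ≃ᵇ Q) (f : Q ≃ᵇ R) : P ≃ᵇ R where
  toEquiv := e.toEquiv.trans f.toEquiv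
  lab_apply x := (f.lab_apply _).trans (e.lab_apply x)
  le_iff x y := (f.le_iff _ _).trans (e.le_iff x y)
  image_boxes := by simp [← f.image_boxes, ← e.image_boxes, image_image]

def seqCongr (e : P ≃ᵇ P') (f : Q ≃ᵇ Q') : seqPB P Q ≃ᵇ seqPB P' Q' where
  toEquiv := e.toEquiv.sumCongr f.toEquiv
  lab_apply := by rintro (x | x); exacts [e.lab_apply x, f.lab_apply x]
  le_iff := by rintro (x | x) (y | y); exacts [e.le_iff x y, Iff.rfl, Iff.rfl, f.le_iff x y]
  image_boxes := by
    have h := image_image_sumMap_sumBoxes e.toEquiv f.toEquiv P.boxes Q.boxes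
    rwa [e.image_boxes, f.image_boxes] at h

def parCongr (e : P ≃ᵇ P') (f : Q ≃ᵇ Q') : parPB P Q ≃ᵇ parPB P' Q' where
  toEquiv := e.toEquiv.sumCongr f.toEquiv
  lab_apply := by rintro (x | x); exacts [e.lab_apply x, f.lab_apply x]
  le_iff := by rintro (x | x) (y | y); exacts [e.le_iff x y, Iff.rfl, Iff.rfl, f.le_iff x y]
  image_boxes := by
    have h := image_image_sumMap_sumBoxes e.toEquiv f.toEquiv P.boxes Q.boxes
    rwa [e.image_boxes, f.image_boxes] at h

def boxCongr (e : P ≃ᵇ Q) : boxPB P ≃ᵇ boxPB Q where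
  toEquiv := e.toEquiv
  lab_apply := e.lab_apply
  le_iff := e.le_iff
  image_boxes := e.toEquiv.image_image_eq_iff.2 fun B => by
    simp [boxPB, e.image_mem_boxes, e.toEquiv.image_eq_univ_iff]

def seqAssoc (P Q R : PB A) : seqPB P (seqPB Q R) ≃ᵇ seqPB (seqPB P Q) R where
  toEquiv := (Equiv.sumAssoc _ _ _).symm
  lab_apply := by rintro (x | x | x) <;> rfl
  le_iff := by rintro (x | x | x) (y | y | y) <;> exact Iff.rfl
  image_boxes := image_image_sumAssoc_symm_sumBoxes _ _ _

def parAssoc (P Q R : PB A) : parPB P (parPB Q R) ≃ᵇ parPB (parPB P Q) R where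
  toEquiv := (Equiv.sumAssoc _ _ _).symm
  lab_apply := by rintro (x | x | x) <;> rfl
  le_iff := by rintro (x | x | x) (y | y | y) <;> exact Iff.rfl
  image_boxes := image_image_sumAssoc_symm_sumBoxes _ _ _

def parComm (P Q : PB A) : parPB P Q ≃ᵇ parPB Q P where
  toEquiv := Equiv.sumComm _ _
  lab_apply := by rintro (x | x) <;> rfl
  le_iff := by rintro (x | x) (y | y) <;> exact Iff.rfl
  image_boxes := image_image_sumComm_sumBoxes _ _

def oneSeq (P : PB A) : seqPB (onePB A) P ≃ᵇ P where
  toEquiv := Equiv.emptySum _ _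
  lab_apply := by rintro (x | x); exacts [isEmptyElim x, rfl]
  le_iff := by
    rintro (x | x) (y | y)
    exacts [isEmptyElim x, isEmptyElim x, isEmptyElim y, Iff.rfl]
  image_boxes := image_image_emptySum_sumBoxes _

def seqOne (P : PB A) : seqPB P (onePB A) ≃ᵇ P where
  toEquiv := Equiv.sumEmpty _ _
  lab_apply := by rintro (x | x); exacts [rfl, isEmptyElim x]
  le_iff := by
    rintro (x | x) (y | y)
    exacts [Iff.rfl, isEmptyElim y, isEmptyElim x, isEmptyElim x]
  image_boxes := image_image_sumEmpty_sumBoxes _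

def onePar (P : PB A) : parPB (onePB A) P ≃ᵇ P where
  toEquiv := Equiv.emptySum _ _
  lab_apply := by rintro (x | x); exacts [isEmptyElim x, rfl]
  le_iff := by
    rintro (x | x) (y | y)
    exacts [isEmptyElim x, isEmptyElim x, isEmptyElim y, Iff.rfl]
  image_boxes := image_image_emptySum_sumBoxes _

def boxBox (P : PB A) : boxPB (boxPB P) ≃ᵇ boxPB P where
  toEquiv := Equiv.refl _
  lab_apply _ := rfl
  le_iff _ _ := Iff.rfl
  image_boxes := by
    have h : (boxPB (boxPB P)).boxes = (boxPB P).boxes := by simp [boxPB, union_assoc]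
    rw [h]
    exact (refl _).image_boxes

def boxOne : boxPB (onePB A) ≃ᵇ onePB A where
  toEquiv := Equiv.refl _
  lab_apply _ := rfl
  le_iff _ _ := Iff.rfl
  image_boxes := by
    have h : (boxPB (onePB A)).boxes = (onePB A).boxes := by
      simp [boxPB, onePB, not_nonempty_iff_eq_empty.1, eq_empty_of_isEmpty]
    rw [h]
    exact (refl _).image_boxes

def unbox (e : boxPB P ≃ᵇ boxPB Q) (hP : univ ∉ P.boxes) (hQ : univ ∉ Q.boxes) : P ≃ᵇ Q where
  toEquiv := e.toEquiv
  lab_apply := e.lab_apply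
  le_iff := e.le_iff
  image_boxes := e.toEquiv.image_image_eq_iff.2 fun B => by
    by_cases hB : B = univ
    · subst hB
      rw [image_univ_of_surjective e.toEquiv.surjective]
      exact iff_of_false hQ hP
    · exact ⟨fun h => Or.resolve_right ((e.image_mem_boxes B).1 (Or.inl h)) fun h' => hB h'.1,
        fun h => Or.resolve_right ((e.image_mem_boxes B).2 (Or.inl h)) fun h' =>
          hB (e.toEquiv.image_eq_univ_iff.1 h'.1)⟩

def ofIsEmpty (P : PB A) [IsEmpty P.Ev] : P ≃ᵇ onePB A where
  toEquiv := Equiv.equivOfIsEmpty _ _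
  lab_apply x := isEmptyElim x
  le_iff x := isEmptyElim x
  image_boxes := (Equiv.equivOfIsEmpty _ _).image_image_eq_iff.2 fun B =>
    iff_of_false (notMem_empty _) fun hB => (P.boxes_ne B hB).elim fun x _ => isEmptyElim x

def restrictCongr {S T : Set P.Ev} (h : S = T) : restrictPB P S ≃ᵇ restrictPB P T :=
  h ▸ refl _

def restrictUniv {S : Set P.Ev} (h : S = univ) : restrictPB P S ≃ᵇ P :=
  (restrictCongr h).trans
    ⟨Equiv.Set.univ _, fun _ => rfl, fun _ _ => Iff.rfl,
      (Equiv.Set.univ _).image_image_eq_iff.2 fun _ => Iff.rfl⟩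

def restrictEmpty {S : Set P.Ev} (h : S = ∅) : restrictPB P S ≃ᵇ onePB A :=
  haveI : IsEmpty (restrictPB P S).Ev := isEmpty_coe_sort.2 h
  ofIsEmpty _

def restrictImage (e : P ≃ᵇ Q) (S : Set P.Ev) :
    restrictPB P S ≃ᵇ restrictPB Q (e.toEquiv '' S) where
  toEquiv := e.toEquiv.image S
  lab_apply x := e.lab_apply x.1
  le_iff x y := e.le_iff x.1 y.1
  image_boxes := (e.toEquiv.image S).image_image_eq_iff.2 fun B => by
    show Subtype.val '' (e.toEquiv.image S '' B) ∈ Q.boxes ↔ Subtype.val '' B ∈ P.boxes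
    rw [← e.image_mem_boxes, image_image, image_image]
    rfl

def restrictSeq (S : Set (seqPB P Q).Ev) :
    restrictPB (seqPB P Q) S ≃ᵇ
      seqPB (restrictPB P (Sum.inl ⁻¹' S)) (restrictPB Q (Sum.inr ⁻¹' S)) where
  toEquiv := Equiv.subtypeSum
  lab_apply := by rintro ⟨x | x, _⟩ <;> rfl
  le_iff := by rintro ⟨x | x, _⟩ ⟨y | y, _⟩ <;> exact Iff.rfl
  image_boxes := Equiv.subtypeSum.image_image_eq_iff.2 image_subtypeSum_mem_sumBoxes_iff

def restrictPar (S : Set (parPB P Q).Ev) :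
    restrictPB (parPB P Q) S ≃ᵇ
      parPB (restrictPB P (Sum.inl ⁻¹' S)) (restrictPB Q (Sum.inr ⁻¹' S)) where
  toEquiv := Equiv.subtypeSum
  lab_apply := by rintro ⟨x | x, _⟩ <;> rfl
  le_iff := by rintro ⟨x | x, _⟩ ⟨y | y, _⟩ <;> exact Iff.rfl
  image_boxes := Equiv.subtypeSum.image_image_eq_iff.2 image_subtypeSum_mem_sumBoxes_iff

def restrictSeqRangeInl : restrictPB (seqPB P Q) (range Sum.inl) ≃ᵇ P :=
  (restrictSeq _).trans
    (((restrictUniv (preimage_range _)).seqCongr (restrictEmpty preimage_inr_range_inl)).trans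
      (seqOne P))

def restrictSeqRangeInr : restrictPB (seqPB P Q) (range Sum.inr) ≃ᵇ Q :=
  (restrictSeq _).trans
    (((restrictEmpty preimage_inl_range_inr).seqCongr (restrictUniv (preimage_range _))).trans
      (oneSeq Q))

def restrictParRangeInl : restrictPB (parPB P Q) (range Sum.inl) ≃ᵇ P :=
  (restrictPar _).trans
    (((restrictUniv (preimage_range _)).parCongr (restrictEmpty preimage_inr_range_inl)).trans
      ((parComm _ _).trans (onePar P)))

def restrictParRangeInr : restrictPB (parPB P Q) (range Sum.inr) ≃ᵇ Q :=
  (restrictPar _).trans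
    (((restrictEmpty preimage_inl_range_inr).parCongr (restrictUniv (preimage_range _))).trans
      (onePar Q))

end PBEquiv

theorem iso_iff_nonempty_pbEquiv {P Q : PB A} : Iso P Q ↔ Nonempty (P ≃ᵇ Q) := by
  constructor
  · rintro ⟨φ, hord, hbox⟩
    let g := Equiv.ofBijective φ.toFun φ.bij
    exact ⟨⟨g, φ.lab_eq, fun x y => ⟨hord x y, φ.mono x y⟩,
      g.image_image_eq_iff.2 fun B => ⟨hbox B, φ.box_pres B⟩⟩⟩
  · rintro ⟨e⟩
    exact ⟨⟨e.toEquiv, e.toEquiv.bijective, e.lab_apply, fun x y => (e.le_iff x y).2,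
      fun B => (e.image_mem_boxes B).2⟩, fun x y => (e.le_iff x y).1,
      fun B => (e.image_mem_boxes B).1⟩

theorem BimEq.nonempty_pbEquiv {s t : Term A} (h : BimEq s t) : Nonempty (semT s ≃ᵇ semT t) := by
  induction h with
  | seq_assoc => exact ⟨.seqAssoc _ _ _⟩
  | par_assoc => exact ⟨.parAssoc _ _ _⟩
  | par_comm => exact ⟨.parComm _ _⟩
  | seq_unit_l => exact ⟨.oneSeq _⟩
  | seq_unit_r => exact ⟨.seqOne _⟩
  | par_unit => exact ⟨.onePar _⟩
  | box_box => exact ⟨.boxBox _⟩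
  | box_one => exact ⟨.boxOne⟩
  | refl => exact ⟨.refl _⟩
  | symm _ ih => exact ih.map .symm
  | trans _ _ ih₁ ih₂ => exact ⟨ih₁.some.trans ih₂.some⟩
  | seq_congr _ _ ih₁ ih₂ => exact ⟨ih₁.some.seqCongr ih₂.some⟩
  | par_congr _ _ ih₁ ih₂ => exact ⟨ih₁.some.parCongr ih₂.some⟩
  | box_congr _ ih => exact ih.map .boxCongr

instance : Trans (@BimEq A) (@BimEq A) (@BimEq A) := ⟨BimEq.trans⟩

namespace BimEq

theorem par_unit_r (s : Term A) : BimEq (.par s .one) s :=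
  (par_comm _ _).trans (par_unit s)

theorem par_medial (a b c d : Term A) :
    BimEq (.par (.par a b) (.par c d)) (.par (.par a c) (.par b d)) :=
  calc BimEq (.par (.par a b) (.par c d)) (.par a (.par b (.par c d))) := (par_assoc _ _ _).symm
    BimEq _ (.par a (.par (.par b c) d)) := par_congr (refl a) (par_assoc _ _ _)
    BimEq _ (.par a (.par (.par c b) d)) := par_congr (refl a) (par_congr (par_comm _ _) (refl d))
    BimEq _ (.par a (.par c (.par b d))) := par_congr (refl a) (par_assoc _ _ _).symm
    BimEq _ (.par (.par a c) (.par b d)) := par_assoc _ _ _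

theorem seq_medial {a b c d : Term A} (h : BimEq b .one ∨ BimEq c .one) :
    BimEq (.seq (.seq a b) (.seq c d)) (.seq (.seq a c) (.seq b d)) := by
  rcases h with hb | hc
  · have hab : BimEq (.seq a b) a := (seq_congr (refl a) hb).trans (seq_unit_r a)
    have hbd : BimEq (.seq b d) d := (seq_congr hb (refl d)).trans (seq_unit_l d)
    calc BimEq (.seq (.seq a b) (.seq c d)) (.seq a (.seq c d)) := seq_congr hab (refl _)
      BimEq _ (.seq (.seq a c) d) := seq_assoc _ _ _
      BimEq _ (.seq (.seq a c) (.seq b d)) := seq_congr (refl _) hbd.symm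
  · have hac : BimEq (.seq a c) a := (seq_congr (refl a) hc).trans (seq_unit_r a)
    have hcd : BimEq (.seq c d) d := (seq_congr hc (refl d)).trans (seq_unit_l d)
    calc BimEq (.seq (.seq a b) (.seq c d)) (.seq (.seq a b) d) := seq_congr (refl _) hcd
      BimEq _ (.seq a (.seq b d)) := (seq_assoc _ _ _).symm
      BimEq _ (.seq (.seq a c) (.seq b d)) := seq_congr hac.symm (refl _)

theorem one_of_isEmpty : ∀ {t : Term A}, IsEmpty (semT t).Ev → BimEq t .one
  | .one, _ => refl _
  | .atom _, h => h.elim ()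
  | .seq _ _, h =>
    (seq_congr (one_of_isEmpty (isEmpty_sum.1 h).1) (one_of_isEmpty (isEmpty_sum.1 h).2)).trans
      (seq_unit_l _)
  | .par _ _, h =>
    (par_congr (one_of_isEmpty (isEmpty_sum.1 h).1) (one_of_isEmpty (isEmpty_sum.1 h).2)).trans
      (par_unit _)
  | .box s, h => (box_congr (one_of_isEmpty (t := s) h)).trans box_one

end BimEq

namespace Term

inductive IsNormal : Term A → Prop
  | one : IsNormal .one
  | atom (a : A) : IsNormal (.atom a)
  | seq {s t : Term A} : IsNormal s → IsNormal t → s ≠ .one → t ≠ .one → IsNormal (.seq s t)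
  | par {s t : Term A} : IsNormal s → IsNormal t → s ≠ .one → t ≠ .one → IsNormal (.par s t)
  | box {s : Term A} : IsNormal s → s ≠ .one → (∀ u, s ≠ .box u) → IsNormal (.box s)

theorem exists_isNormal_bimEq : ∀ s : Term A, ∃ n, IsNormal n ∧ BimEq s n
  | .one => ⟨.one, .one, .refl _⟩
  | .atom a => ⟨.atom a, .atom a, .refl _⟩
  | .seq s t => by
    obtain ⟨m, hm, hsm⟩ := exists_isNormal_bimEq s
    obtain ⟨n, hn, htn⟩ := exists_isNormal_bimEq t
    have h := hsm.seq_congr htn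
    by_cases hm₁ : m = .one
    · exact ⟨n, hn, h.trans (hm₁ ▸ .seq_unit_l n)⟩
    by_cases hn₁ : n = .one
    · exact ⟨m, hm, h.trans (hn₁ ▸ .seq_unit_r m)⟩
    exact ⟨.seq m n, .seq hm hn hm₁ hn₁, h⟩
  | .par s t => by
    obtain ⟨m, hm, hsm⟩ := exists_isNormal_bimEq s
    obtain ⟨n, hn, htn⟩ := exists_isNormal_bimEq t
    have h := hsm.par_congr htn
    by_cases hm₁ : m = .one
    · exact ⟨n, hn, h.trans (hm₁ ▸ .par_unit n)⟩
    by_cases hn₁ : n = .one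
    · exact ⟨m, hm, h.trans (hn₁ ▸ .par_unit_r m)⟩
    exact ⟨.par m n, .par hm hn hm₁ hn₁, h⟩
  | .box s => by
    obtain ⟨m, hm, hsm⟩ := exists_isNormal_bimEq s
    have h := hsm.box_congr
    by_cases hm₁ : m = .one
    · exact ⟨.one, .one, h.trans (hm₁ ▸ .box_one)⟩
    by_cases hbox : ∃ u, m = .box u
    · obtain ⟨u, rfl⟩ := hbox
      exact ⟨.box u, hm, h.trans (.box_box u)⟩
    exact ⟨.box m, .box hm hm₁ fun u hu => hbox ⟨u, hu⟩, h⟩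

theorem IsNormal.nonempty {s : Term A} (h : IsNormal s) (hs : s ≠ .one) :
    Nonempty (semT s).Ev := by
  induction h with
  | one => exact absurd rfl hs
  | atom => exact ⟨()⟩
  | seq _ _ h₁ _ ih _ | par _ _ h₁ _ ih _ => exact (ih h₁).map Sum.inl
  | box _ h _ ih => exact ih h

theorem IsNormal.univ_notMem_boxes {s : Term A} (h : IsNormal s) (hs : ∀ u, s ≠ .box u) :
    univ ∉ (semT s).boxes := by
  cases h with
  | one | atom => exact notMem_empty _
  | seq h₁ h₂ hne₁ hne₂ | par h₁ h₂ hne₁ hne₂ =>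
    have := h₁.nonempty hne₁
    have := h₂.nonempty hne₂
    exact univ_notMem_sumBoxes
  | box => exact absurd rfl (hs _)

end Term

section Splitting

variable {P Q : PB A}

theorem Nested.eq_empty_or_univ {S : Set P.Ev} (h : Nested P S) (hu : univ ∈ P.boxes) :
    S = ∅ ∨ S = univ :=
  (h univ hu).symm.imp (fun h => by rwa [univ_inter] at h) univ_subset_iff.1

theorem Nested.preimage_inl_of_seqPB {S : Set (seqPB P Q).Ev} (h : Nested (seqPB P Q) S) :
    Nested P (Sum.inl ⁻¹' S) := fun B hB =>
  (h _ (Or.inl ⟨B, hB, rfl⟩)).imp (fun h x hx => h ⟨x, hx, rfl⟩) fun h =>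
    eq_empty_of_forall_notMem fun x hx => h.subset ⟨⟨x, hx.1, rfl⟩, hx.2⟩

theorem Nested.preimage_inr_of_seqPB {S : Set (seqPB P Q).Ev} (h : Nested (seqPB P Q) S) :
    Nested Q (Sum.inr ⁻¹' S) := fun B hB =>
  (h _ (Or.inr ⟨B, hB, rfl⟩)).imp (fun h x hx => h ⟨x, hx, rfl⟩) fun h =>
    eq_empty_of_forall_notMem fun x hx => h.subset ⟨⟨x, hx.1, rfl⟩, hx.2⟩

-- `seqPB` and `parPB` have the same boxes, so `Nested` means the same for both.
theorem Nested.preimage_inl_of_parPB {S : Set (parPB P Q).Ev} (h : Nested (parPB P Q) S) :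
    Nested P (Sum.inl ⁻¹' S) :=
  Nested.preimage_inl_of_seqPB (Q := Q) h

theorem Nested.preimage_inr_of_parPB {S : Set (parPB P Q).Ev} (h : Nested (parPB P Q) S) :
    Nested Q (Sum.inr ⁻¹' S) :=
  Nested.preimage_inr_of_seqPB (P := P) h

theorem IsPrefix.preimage_inl_eq_univ_or_preimage_inr_eq_empty {S : Set (seqPB P Q).Ev}
    (h : IsPrefix (seqPB P Q) S) : Sum.inl ⁻¹' S = univ ∨ Sum.inr ⁻¹' S = ∅ :=
  or_iff_not_imp_right.2 fun hS =>
    let ⟨_, hb⟩ := nonempty_iff_ne_empty.2 hS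
    eq_univ_of_forall fun _ => by_contra fun ha => h _ hb _ ha

theorem IsPrefix.eq_empty_or_univ_of_parPB [Nonempty P.Ev] [Nonempty Q.Ev]
    {S : Set (parPB P Q).Ev} (h : IsPrefix (parPB P Q) S) : S = ∅ ∨ S = univ := by
  have side : ∀ x y : (parPB P Q).Ev, (parPB P Q).le x y → x.isLeft = y.isLeft := by
    rintro (x | x) (y | y) hxy <;> first | rfl | exact hxy.elim
  by_contra! hS
  obtain ⟨x, hx⟩ := hS.1
  obtain ⟨y, hy⟩ := (ne_univ_iff_exists_notMem S).1 hS.2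
  have same_side : ∀ z : (parPB P Q).Ev, z.isLeft = y.isLeft := fun z => by
    by_cases hz : z ∈ S
    · exact side _ _ (h z hz y hy)
    · exact (side _ _ (h x hx z hz)).symm.trans (side _ _ (h x hx y hy))
  simpa using (same_side (.inl (Classical.arbitrary _))).trans
    (same_side (.inr (Classical.arbitrary _))).symm

theorem Isolated.mem_of_le {S : Set P.Ev} (h : Isolated P S) {x y : P.Ev} (hx : x ∈ S)
    (hxy : P.le x y) : y ∈ S :=
  by_contra fun hy => (h x hx y hy).1 hxy

theorem Isolated.mem_of_ge {S : Set P.Ev} (h : Isolated P S) {x y : P.Ev} (hx : x ∈ S)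
    (hyx : P.le y x) : y ∈ S :=
  by_contra fun hy => (h x hx y hy).2 hyx

theorem Isolated.eq_empty_or_univ_of_seqPB [Nonempty P.Ev] [Nonempty Q.Ev]
    {S : Set (seqPB P Q).Ev} (h : Isolated (seqPB P Q) S) : S = ∅ ∨ S = univ := by
  refine S.eq_empty_or_nonempty.imp_right fun ⟨x, hx⟩ => ?_
  obtain ⟨p⟩ := ‹Nonempty P.Ev›
  obtain ⟨q⟩ := ‹Nonempty Q.Ev›
  have hq : Sum.inr q ∈ S := by
    rcases x with a | b
    · exact h.mem_of_le hx trivial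
    · exact h.mem_of_le (h.mem_of_ge (y := .inl p) hx trivial) trivial
  have hp : Sum.inl p ∈ S := h.mem_of_ge hq trivial
  exact eq_univ_of_forall fun
    | .inl _ => h.mem_of_ge hq trivial
    | .inr _ => h.mem_of_le hp trivial

theorem IsPrefix.image (e : P ≃ᵇ Q) {S : Set P.Ev} (h : IsPrefix P S) :
    IsPrefix Q (e.toEquiv '' S) := by
  rintro _ ⟨x, hx, rfl⟩ y hy
  rw [← e.toEquiv.apply_symm_apply y, e.le_iff]
  exact h x hx _ fun h' => hy ⟨_, h', e.toEquiv.apply_symm_apply y⟩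

theorem Isolated.image (e : P ≃ᵇ Q) {S : Set P.Ev} (h : Isolated P S) :
    Isolated Q (e.toEquiv '' S) := by
  rintro _ ⟨x, hx, rfl⟩ y hy
  rw [← e.toEquiv.apply_symm_apply y, e.le_iff, e.le_iff]
  exact h x hx _ fun h' => hy ⟨_, h', e.toEquiv.apply_symm_apply y⟩

theorem Nested.image (e : P ≃ᵇ Q) {S : Set P.Ev} (h : Nested P S) :
    Nested Q (e.toEquiv '' S) := by
  intro B hB
  rw [← e.image_boxes] at hB
  obtain ⟨B, hB, rfl⟩ := hB
  refine (h B hB).imp (image_mono ·) fun h' => ?_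
  rw [← image_inter e.toEquiv.injective, h', image_empty]

theorem isPrefix_range_inl : IsPrefix (seqPB P Q) (range Sum.inl) := by
  rintro _ ⟨a, rfl⟩ (b | b) hb
  exacts [(hb ⟨b, rfl⟩).elim, trivial]

theorem isolated_range_inl : Isolated (parPB P Q) (range Sum.inl) := by
  rintro _ ⟨a, rfl⟩ (b | b) hb
  exacts [(hb ⟨b, rfl⟩).elim, ⟨id, id⟩]

theorem nested_range_inl_seqPB : Nested (seqPB P Q) (range Sum.inl) := by
  rintro _ (⟨C, -, rfl⟩ | ⟨C, -, rfl⟩)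
  exacts [Or.inl (image_subset_range _ _),
    Or.inr (disjoint_iff_inter_eq_empty.1 disjoint_range_inl_image_inr.symm)]

theorem nested_range_inl_parPB : Nested (parPB P Q) (range Sum.inl) :=
  nested_range_inl_seqPB (Q := Q)

end Splitting

def Splits (op : Term A → Term A → Term A) (w : Term A) (S : Set (semT w).Ev) : Prop :=
  ∃ w₁ w₂, BimEq w (op w₁ w₂) ∧ Nonempty (restrictPB (semT w) S ≃ᵇ semT w₁) ∧
    Nonempty (restrictPB (semT w) Sᶜ ≃ᵇ semT w₂)

theorem splits_of_eq_empty_or_univ {op : Term A → Term A → Term A}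
    (hl : ∀ u, BimEq u (op .one u)) (hr : ∀ u, BimEq u (op u .one)) {w : Term A}
    {S : Set (semT w).Ev} (hS : S = ∅ ∨ S = univ) : Splits op w S := by
  rcases hS with rfl | rfl
  · exact ⟨.one, w, hl w, ⟨.restrictEmpty rfl⟩, ⟨.restrictUniv compl_empty⟩⟩
  · exact ⟨w, .one, hr w, ⟨.restrictUniv rfl⟩, ⟨.restrictEmpty compl_univ⟩⟩

theorem seq_splits {w : Term A} (hw : w.IsNormal) {S : Set (semT w).Ev}
    (hpre : IsPrefix (semT w) S) (hnest : Nested (semT w) S) : Splits .seq w S := by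
  have trivial_split {w : Term A} {S : Set (semT w).Ev} (hS : S = ∅ ∨ S = univ) :
      Splits .seq w S :=
    splits_of_eq_empty_or_univ (fun u => (BimEq.seq_unit_l u).symm)
      (fun u => (BimEq.seq_unit_r u).symm) hS
  induction hw with
  | one => exact trivial_split (Or.inl (eq_empty_of_forall_notMem fun x => (x : PEmpty).elim))
  | atom => exact trivial_split (S.eq_empty_or_nonempty.imp_right fun ⟨x, hx⟩ =>
      eq_univ_of_forall fun y => (show y = x from rfl) ▸ hx)
  | box hw hne =>
    have := hw.nonempty hne
    exact trivial_split (hnest.eq_empty_or_univ univ_mem_boxPB)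
  | par hw₁ hw₂ hne₁ hne₂ =>
    have := hw₁.nonempty hne₁
    have := hw₂.nonempty hne₂
    exact trivial_split hpre.eq_empty_or_univ_of_parPB
  | seq _ _ _ _ ih₁ ih₂ =>
    obtain ⟨a, b, hab, ⟨ea⟩, ⟨eb⟩⟩ :=
      ih₁ (fun x hx y hy => hpre (.inl x) hx (.inl y) hy) hnest.preimage_inl_of_seqPB
    obtain ⟨c, d, hcd, ⟨ec⟩, ⟨ed⟩⟩ :=
      ih₂ (fun x hx y hy => hpre (.inr x) hx (.inr y) hy) hnest.preimage_inr_of_seqPB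
    -- `S` is a prefix, so it contains all of `w₁` or nothing of `w₂`.
    have hmid : BimEq b .one ∨ BimEq c .one := by
      refine hpre.preimage_inl_eq_univ_or_preimage_inr_eq_empty.imp
        (fun h => .one_of_isEmpty ?_) (fun h => .one_of_isEmpty ?_)
      · exact eb.toEquiv.isEmpty_congr.1 (isEmpty_coe_sort.2 (compl_empty_iff.2 h))
      · exact ec.toEquiv.isEmpty_congr.1 (isEmpty_coe_sort.2 h)
    exact ⟨.seq a c, .seq b d, (hab.seq_congr hcd).trans (.seq_medial hmid),
      ⟨(PBEquiv.restrictSeq S).trans (ea.seqCongr ec)⟩,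
      ⟨(PBEquiv.restrictSeq Sᶜ).trans (eb.seqCongr ed)⟩⟩

theorem par_splits {w : Term A} (hw : w.IsNormal) {S : Set (semT w).Ev}
    (hiso : Isolated (semT w) S) (hnest : Nested (semT w) S) : Splits .par w S := by
  have trivial_split {w : Term A} {S : Set (semT w).Ev} (hS : S = ∅ ∨ S = univ) :
      Splits .par w S :=
    splits_of_eq_empty_or_univ (fun u => (BimEq.par_unit u).symm)
      (fun u => (BimEq.par_unit_r u).symm) hS
  induction hw with
  | one => exact trivial_split (Or.inl (eq_empty_of_forall_notMem fun x => (x : PEmpty).elim))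
  | atom => exact trivial_split (S.eq_empty_or_nonempty.imp_right fun ⟨x, hx⟩ =>
      eq_univ_of_forall fun y => (show y = x from rfl) ▸ hx)
  | box hw hne =>
    have := hw.nonempty hne
    exact trivial_split (hnest.eq_empty_or_univ univ_mem_boxPB)
  | seq hw₁ hw₂ hne₁ hne₂ =>
    have := hw₁.nonempty hne₁
    have := hw₂.nonempty hne₂
    exact trivial_split hiso.eq_empty_or_univ_of_seqPB
  | par _ _ _ _ ih₁ ih₂ =>
    obtain ⟨a, b, hab, ⟨ea⟩, ⟨eb⟩⟩ :=
      ih₁ (fun x hx y hy => hiso (.inl x) hx (.inl y) hy) hnest.preimage_inl_of_parPB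
    obtain ⟨c, d, hcd, ⟨ec⟩, ⟨ed⟩⟩ :=
      ih₂ (fun x hx y hy => hiso (.inr x) hx (.inr y) hy) hnest.preimage_inr_of_parPB
    exact ⟨.par a c, .par b d, (hab.par_congr hcd).trans (.par_medial a b c d),
      ⟨(PBEquiv.restrictPar S).trans (ea.parCongr ec)⟩,
      ⟨(PBEquiv.restrictPar Sᶜ).trans (eb.parCongr ed)⟩⟩

theorem Splits.exists_pbEquiv {op : Term A → Term A → Term A} {R P Q : PB A} {t : Term A}
    (e : R ≃ᵇ semT t) {L : Set R.Ev} (h : Splits op t (e.toEquiv '' L))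
    (eP : restrictPB R L ≃ᵇ P) (eQ : restrictPB R Lᶜ ≃ᵇ Q) :
    ∃ t₁ t₂, BimEq t (op t₁ t₂) ∧ Nonempty (P ≃ᵇ semT t₁) ∧ Nonempty (Q ≃ᵇ semT t₂) := by
  obtain ⟨t₁, t₂, ht, ⟨e₁⟩, ⟨e₂⟩⟩ := h
  exact ⟨t₁, t₂, ht, ⟨eP.symm.trans ((e.restrictImage L).trans e₁)⟩,
    ⟨eQ.symm.trans ((e.restrictImage Lᶜ).trans
      ((PBEquiv.restrictCongr (e.toEquiv.image_compl L)).trans e₂))⟩⟩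

theorem exists_seq_of_pbEquiv {P Q : PB A} {t : Term A} (ht : t.IsNormal)
    (e : seqPB P Q ≃ᵇ semT t) :
    ∃ t₁ t₂, BimEq t (.seq t₁ t₂) ∧ Nonempty (P ≃ᵇ semT t₁) ∧ Nonempty (Q ≃ᵇ semT t₂) :=
  (seq_splits ht (isPrefix_range_inl.image e) (nested_range_inl_seqPB.image e)).exists_pbEquiv e
    .restrictSeqRangeInl ((PBEquiv.restrictCongr compl_range_inl).trans .restrictSeqRangeInr)

theorem exists_par_of_pbEquiv {P Q : PB A} {t : Term A} (ht : t.IsNormal)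
    (e : parPB P Q ≃ᵇ semT t) :
    ∃ t₁ t₂, BimEq t (.par t₁ t₂) ∧ Nonempty (P ≃ᵇ semT t₁) ∧ Nonempty (Q ≃ᵇ semT t₂) :=
  (par_splits ht (isolated_range_inl.image e) (nested_range_inl_parPB.image e)).exists_pbEquiv e
    .restrictParRangeInl ((PBEquiv.restrictCongr compl_range_inl).trans .restrictParRangeInr)

theorem eq_atom_of_pbEquiv {a : A} {t : Term A} (ht : t.IsNormal) (e : atomPB a ≃ᵇ semT t) :
    t = .atom a := by
  cases ht with
  | one => exact PEmpty.elim (e.toEquiv ())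
  | atom b => rw [show b = a from e.lab_apply ()]
  | seq h₁ h₂ hne₁ hne₂ | par h₁ h₂ hne₁ hne₂ =>
    obtain ⟨x⟩ := h₁.nonempty hne₁
    obtain ⟨y⟩ := h₂.nonempty hne₂
    exact absurd (e.toEquiv.symm.injective (Subsingleton.elim (α := PUnit) _ _))
      (Sum.inl_ne_inr (a := x) (b := y))
  | box h hne =>
    have := h.nonempty hne
    exact (notMem_empty _ ((e.symm.image_mem_boxes univ).2 univ_mem_boxPB)).elim

theorem exists_box_of_pbEquiv {s t : Term A} (hs : s.IsNormal) (hne : s ≠ .one)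
    (hnb : ∀ u, s ≠ .box u) (ht : t.IsNormal) (e : boxPB (semT s) ≃ᵇ semT t) :
    ∃ t', t = .box t' ∧ Nonempty (semT s ≃ᵇ semT t') := by
  have := hs.nonempty hne
  have hu : univ ∈ (semT t).boxes := by
    rw [← image_univ_of_surjective e.toEquiv.surjective]
    exact (e.image_mem_boxes univ).2 univ_mem_boxPB
  obtain ⟨t', rfl⟩ : ∃ t', t = .box t' := by
    by_contra! h
    exact ht.univ_notMem_boxes h hu
  cases ht with
  | box ht' _ htb =>
    exact ⟨t', rfl, ⟨e.unbox (hs.univ_notMem_boxes hnb) (ht'.univ_notMem_boxes htb)⟩⟩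

theorem bimEq_of_forall_isNormal {s t : Term A}
    (h : ∀ n : Term A, n.IsNormal → (semT s ≃ᵇ semT n) → BimEq s n) (e : semT s ≃ᵇ semT t) :
    BimEq s t := by
  obtain ⟨n, hn, htn⟩ := t.exists_isNormal_bimEq
  obtain ⟨f⟩ := htn.nonempty_pbEquiv
  exact (h n hn (e.trans f)).trans htn.symm

theorem bimEq_of_pbEquiv {s : Term A} (hs : s.IsNormal) {t : Term A} (e : semT s ≃ᵇ semT t) :
    BimEq s t := by
  induction hs generalizing t with
  | one =>
    exact (BimEq.one_of_isEmpty (e.toEquiv.isEmpty_congr.1 (inferInstanceAs (IsEmpty PEmpty)))).symm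
  | atom a => exact bimEq_of_forall_isNormal (fun t ht e => eq_atom_of_pbEquiv ht e ▸ .refl _) e
  | box hs hne hnb ih =>
    refine bimEq_of_forall_isNormal (fun t ht e => ?_) e
    obtain ⟨t', rfl, ⟨e'⟩⟩ := exists_box_of_pbEquiv hs hne hnb ht e
    exact (ih e').box_congr
  | seq _ _ _ _ ih₁ ih₂ =>
    refine bimEq_of_forall_isNormal (fun t ht e => ?_) e
    obtain ⟨t₁, t₂, h, ⟨e₁⟩, ⟨e₂⟩⟩ := exists_seq_of_pbEquiv ht e
    exact (BimEq.seq_congr (ih₁ e₁) (ih₂ e₂)).trans h.symm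
  | par _ _ _ _ ih₁ ih₂ =>
    refine bimEq_of_forall_isNormal (fun t ht e => ?_) e
    obtain ⟨t₁, t₂, h, ⟨e₁⟩, ⟨e₂⟩⟩ := exists_par_of_pbEquiv ht e
    exact (BimEq.par_congr (ih₁ e₁) (ih₂ e₂)).trans h.symm

end Completeness

/-- Soundness and completeness of the bimonoid-with-boxes axioms for isomorphism. -/
theorem bimonoid_completeness (A : Type) (s t : Term A) :
    Iso (semT s) (semT t) ↔ BimEq s t := by
  rw [iso_iff_nonempty_pbEquiv]
  refine ⟨fun ⟨e⟩ => ?_, BimEq.nonempty_pbEquiv⟩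
  obtain ⟨n, hn, hsn⟩ := s.exists_isNormal_bimEq
  obtain ⟨f⟩ := hsn.nonempty_pbEquiv
  exact hsn.trans (bimEq_of_pbEquiv hn (f.symm.trans e))
end
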